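/- arXiv:2206.08490 — 5 statements merged into one kernel-verified Lean document; each statement's English description precedes it below -/
import Mathlib

section
/- Let n be a positive integer, let a 2x2 complex matrix A with entries α_{ab} satisfy |α_{00}|^2 + |α_{01}|^2 = λ_0 and |α_{10}|^2 + |α_{11}|^2 = λ_1 (i.e., A A† diagonal). For fixed nonnegative integers k0, k1 with k0 + k1 = n, define for each (l0, l1) with l0 + l1 = n the amplitude F(l0, l1) = Σ_{m(k,l)} sqrt( binomial(k0, m00) binomial(k1, m10) binomial(l0, m00) binomial(l1, m01) ) * α_{00}^{m00} α_{01}^{m01} α_{10}^{m10} α_{11}^{m11}, where the sum is over all 2x2 nonnegative integer arrays with row sums (k0, k1) and column sums (l0, l1). Then Σ_{l0 + l1 = n} |F(l0, l1)|^2 = λ_0^{k0} λ_1^{k1}. -/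
open Finset

/-- 2x2 arrays `(m00, m01, m10, m11)` with row sums `(k0, k1)` and column sums `(l0, l1)`. -/
def squares (k0 k1 l0 l1 : ℕ) : Finset (ℕ × ℕ × ℕ × ℕ) :=
  (Finset.range (k0 + 1) ×ˢ Finset.range (k0 + 1) ×ˢ
      Finset.range (k1 + 1) ×ˢ Finset.range (k1 + 1)).filter
    (fun m => m.1 + m.2.1 = k0 ∧ m.2.2.1 + m.2.2.2 = k1 ∧
      m.1 + m.2.2.1 = l0 ∧ m.2.1 + m.2.2.2 = l1)

/-- The multimode interference amplitude
`F(l0,l1) = Σ_{m(k,l)} sqrt( C(k0,m00) C(k1,m10) C(l0,m00) C(l1,m01) )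
  α00^m00 α01^m01 α10^m10 α11^m11`. -/
noncomputable def Famp (k0 k1 l0 l1 : ℕ) (α : Fin 2 → Fin 2 → ℂ) : ℂ :=
  ∑ m ∈ squares k0 k1 l0 l1,
    (Real.sqrt ((Nat.choose k0 m.1 * Nat.choose k1 m.2.2.1 *
        Nat.choose l0 m.1 * Nat.choose l1 m.2.1 : ℕ)) : ℂ) *
      α 0 0 ^ m.1 * α 0 1 ^ m.2.1 * α 1 0 ^ m.2.2.1 * α 1 1 ^ m.2.2.2

noncomputable section Stmt3AuxSec
namespace Stmt3Aux
open MvPolynomial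

abbrev MP := MvPolynomial (Fin 2) ℂ

def NN (m : Fin 2 →₀ ℕ) : ℕ := (m 0).factorial * (m 1).factorial

/-- The Bargmann–Fock inner product `⟨P,Q⟩ = Σ_m P_m conj(Q_m) m0! m1!`. -/
def pinner (P Q : MP) : ℂ :=
  ∑ m ∈ P.support, coeff m P * (starRingEnd ℂ) (coeff m Q) * (NN m : ℂ)

lemma pinner_eq_sum {P : MP} (Q : MP) {s : Finset (Fin 2 →₀ ℕ)} (hs : P.support ⊆ s) :
    pinner P Q = ∑ m ∈ s, coeff m P * (starRingEnd ℂ) (coeff m Q) * (NN m : ℂ) := by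
  refine Finset.sum_subset hs fun m _ hm => ?_
  rw [MvPolynomial.notMem_support_iff] at hm
  simp [hm]

lemma pinner_add_left (P P' Q : MP) :
    pinner (P + P') Q = pinner P Q + pinner P' Q := by
  rw [pinner_eq_sum (s := P.support ∪ P'.support) Q
      (MvPolynomial.support_add),
    pinner_eq_sum (s := P.support ∪ P'.support) Q subset_union_left,
    pinner_eq_sum (s := P.support ∪ P'.support) Q subset_union_right, ← Finset.sum_add_distrib]
  refine Finset.sum_congr rfl fun m _ => ?_
  rw [coeff_add]; ring

lemma pinner_C_mul_left (a : ℂ) (P Q : MP) :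
    pinner (C a * P) Q = a * pinner P Q := by
  rw [pinner_eq_sum (s := P.support) Q ?_, pinner, Finset.mul_sum]
  · refine Finset.sum_congr rfl fun m _ => ?_
    rw [coeff_C_mul]; ring
  · intro m hm
    rw [MvPolynomial.mem_support_iff] at hm ⊢
    rw [coeff_C_mul] at hm
    exact fun h => hm (by rw [h, mul_zero])

lemma pinner_add_right (P Q Q' : MP) :
    pinner P (Q + Q') = pinner P Q + pinner P Q' := by
  unfold pinner
  rw [← Finset.sum_add_distrib]
  refine Finset.sum_congr rfl fun m _ => ?_
  rw [coeff_add, map_add]; ring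

lemma pinner_C_mul_right (a : ℂ) (P Q : MP) :
    pinner P (C a * Q) = (starRingEnd ℂ) a * pinner P Q := by
  unfold pinner
  rw [Finset.mul_sum]
  refine Finset.sum_congr rfl fun m _ => ?_
  rw [coeff_C_mul, map_mul]; ring

lemma pinner_one_one : pinner 1 1 = 1 := by
  have hs : (1 : MP).support ⊆ {0} := by
    intro m hm
    rw [MvPolynomial.mem_support_iff] at hm
    classical
    rw [MvPolynomial.coeff_one] at hm
    simp only [Finset.mem_singleton]
    by_contra h
    exact hm (if_neg (fun he => h he.symm))
  rw [pinner_eq_sum (s := {0}) 1 hs]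
  simp [NN]

lemma coeff_pderiv (i : Fin 2) (Q : MP) (d : Fin 2 →₀ ℕ) :
    coeff d (pderiv i Q) = coeff (d + Finsupp.single i 1) Q * ((d i : ℂ) + 1) := by
  induction Q using MvPolynomial.induction_on' with
  | monomial s a =>
    rw [pderiv_monomial]
    by_cases h : s i = 0
    · have h2 : s ≠ d + Finsupp.single i 1 := by
        intro he
        apply absurd h
        rw [he]
        simp [Finsupp.add_apply]
      rw [coeff_monomial, coeff_monomial, if_neg h2]
      by_cases h3 : s - Finsupp.single i 1 = d
      · rw [if_pos h3]
        simp [h]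
      · rw [if_neg h3, zero_mul]
    · have hle : Finsupp.single i 1 ≤ s := by
        rw [Finsupp.single_le_iff]
        omega
      have key : s - Finsupp.single i 1 = d ↔ s = d + Finsupp.single i 1 := by
        constructor
        · intro he; rw [← he, tsub_add_cancel_of_le hle]
        · intro he; rw [he]; simp
      rw [coeff_monomial, coeff_monomial]
      by_cases h3 : s - Finsupp.single i 1 = d
      · rw [if_pos h3, if_pos (key.mp h3)]
        have : s i = d i + 1 := by
          rw [key.mp h3]; simp [Finsupp.add_apply]
        rw [this]
        push_cast
        ring
      · rw [if_neg h3, if_neg (fun he => h3 (key.mpr he)), zero_mul]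
  | add p q hp hq =>
    rw [map_add, coeff_add, coeff_add, hp, hq, add_mul]

lemma NN_add_single (i : Fin 2) (d : Fin 2 →₀ ℕ) :
    (NN (d + Finsupp.single i 1) : ℂ) = ((d i : ℂ) + 1) * (NN d : ℂ) := by
  fin_cases i <;>
  · simp only [NN, Finsupp.add_apply, Finsupp.single_apply]
    norm_num [Nat.factorial_succ]
    ring

lemma pinner_adjoint (i : Fin 2) (P Q : MP) :
    pinner (X i * P) Q = pinner P (pderiv i Q) := by
  classical
  have hsub : (X i * P).support ⊆ P.support.image (· + Finsupp.single i 1) := by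
    intro m hm
    rw [MvPolynomial.mem_support_iff, MvPolynomial.coeff_X_mul'] at hm
    by_cases h : i ∈ m.support
    · rw [if_pos h] at hm
      refine Finset.mem_image.mpr ⟨m - Finsupp.single i 1, MvPolynomial.mem_support_iff.mpr hm, ?_⟩
      have : Finsupp.single i 1 ≤ m := by
        rw [Finsupp.single_le_iff]
        have := Finsupp.mem_support_iff.mp h
        omega
      exact tsub_add_cancel_of_le this
    · rw [if_neg h] at hm; exact absurd rfl hm
  rw [pinner_eq_sum Q hsub, Finset.sum_image (fun a _ b _ h => by
    have := congrArg (fun f => f - Finsupp.single i 1) h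
    simpa using this)]
  unfold pinner
  refine Finset.sum_congr rfl fun d _ => ?_
  rw [coeff_pderiv, add_comm d (Finsupp.single i 1), MvPolynomial.coeff_X_mul,
    add_comm (Finsupp.single i 1) d, NN_add_single, map_mul]
  have : (starRingEnd ℂ) ((d i : ℂ) + 1) = (d i : ℂ) + 1 := by
    rw [map_add, Complex.conj_natCast, map_one]
  rw [this]
  ring

def LL (l0 l1 : ℕ) : Fin 2 →₀ ℕ := Finsupp.single 0 l0 + Finsupp.single 1 l1

lemma LL_apply0 (a b : ℕ) : LL a b 0 = a := by
  simp [LL, Finsupp.single_apply]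
lemma LL_apply1 (a b : ℕ) : LL a b 1 = b := by
  simp [LL, Finsupp.single_apply]

lemma LL_add (a b c d : ℕ) : LL a b + LL c d = LL (a + c) (b + d) := by
  simp only [LL, Finsupp.single_add]
  abel

lemma LL_inj {a b c d : ℕ} : LL a b = LL c d ↔ a = c ∧ b = d := by
  constructor
  · intro h
    exact ⟨by rw [← LL_apply0 a b, h, LL_apply0], by rw [← LL_apply1 a b, h, LL_apply1]⟩
  · rintro ⟨rfl, rfl⟩; rfl

lemma NN_LL (a b : ℕ) : NN (LL a b) = a.factorial * b.factorial := by
  simp [NN, LL_apply0, LL_apply1]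

lemma linform_pow (a0 a1 : ℂ) (k : ℕ) :
    (C a0 * X 0 + C a1 * X (1 : Fin 2) : MP) ^ k
      = ∑ j ∈ range (k + 1), monomial (LL j (k - j)) ((k.choose j : ℂ) * a0 ^ j * a1 ^ (k - j)) := by
  rw [add_pow]
  refine Finset.sum_congr rfl fun j hj => ?_
  rw [mul_pow, mul_pow, ← C_pow, ← C_pow, X_pow_eq_monomial, X_pow_eq_monomial,
    show ((k.choose j : ℕ) : MP) = C ((k.choose j : ℕ) : ℂ) from (map_natCast C _).symm,
    C_mul_monomial, C_mul_monomial, monomial_mul, mul_comm _ (C ((k.choose j : ℕ) : ℂ)),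
    C_mul_monomial]
  rw [show Finsupp.single (0 : Fin 2) j + Finsupp.single (1 : Fin 2) (k - j) = LL j (k - j) from rfl]
  congr 1
  ring

section main
variable (α : Fin 2 → Fin 2 → ℂ)

def uP : MP := C (α 0 0) * X 0 + C (α 0 1) * X 1
def vP : MP := C (α 1 0) * X 0 + C (α 1 1) * X 1

lemma pderiv_uP (i : Fin 2) : pderiv i (uP α) = C (α 0 i) := by
  fin_cases i <;> simp [uP, pderiv_C_mul]
lemma pderiv_vP (i : Fin 2) : pderiv i (vP α) = C (α 1 i) := by
  fin_cases i <;> simp [vP, pderiv_C_mul]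

lemma pinner_uP_mul (P Q : MP) :
    pinner (uP α * P) Q = α 0 0 * pinner P (pderiv 0 Q) + α 0 1 * pinner P (pderiv 1 Q) := by
  rw [uP, add_mul, pinner_add_left, mul_assoc, mul_assoc, pinner_C_mul_left, pinner_C_mul_left,
    pinner_adjoint, pinner_adjoint]

lemma pinner_vP_mul (P Q : MP) :
    pinner (vP α * P) Q = α 1 0 * pinner P (pderiv 0 Q) + α 1 1 * pinner P (pderiv 1 Q) := by
  rw [vP, add_mul, pinner_add_left, mul_assoc, mul_assoc, pinner_C_mul_left, pinner_C_mul_left,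
    pinner_adjoint, pinner_adjoint]

variable (lam0 lam1 : ℝ)
variable (hc0 : (starRingEnd ℂ) (α 0 0) * α 0 0 + (starRingEnd ℂ) (α 0 1) * α 0 1 = (lam0 : ℂ))
variable (hc1 : (starRingEnd ℂ) (α 1 0) * α 1 0 + (starRingEnd ℂ) (α 1 1) * α 1 1 = (lam1 : ℂ))
variable (ho' : (starRingEnd ℂ) (α 1 0) * α 0 0 + (starRingEnd ℂ) (α 1 1) * α 0 1 = 0)

include hc1 in
lemma key_v (k1 : ℕ) :
    pinner (vP α ^ k1) (vP α ^ k1) = (k1.factorial : ℂ) * (lam1 : ℂ) ^ k1 := by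
  induction k1 with
  | zero => simpa using pinner_one_one
  | succ b ih =>
    have hd : ∀ i : Fin 2, pderiv i (vP α ^ (b + 1))
        = C (((b : ℂ) + 1) * α 1 i) * vP α ^ b := by
      intro i
      rw [pderiv_pow, pderiv_vP]
      simp only [Nat.add_sub_cancel]
      rw [show ((b + 1 : ℕ) : MP) = C ((b : ℂ) + 1) by
        rw [map_add, map_one, map_natCast]; exact Nat.cast_add_one _, map_mul]
      ring
    nth_rewrite 1 [pow_succ']
    rw [pinner_vP_mul, hd 0, hd 1, pinner_C_mul_right, pinner_C_mul_right, ih]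
    simp only [map_mul, map_add, Complex.conj_natCast, map_one]
    push_cast [Nat.factorial_succ]
    linear_combination (((b : ℂ) + 1) * (b.factorial : ℂ) * (lam1 : ℂ) ^ b) * hc1

include hc0 hc1 ho' in
lemma key (k0 k1 : ℕ) :
    pinner (uP α ^ k0 * vP α ^ k1) (uP α ^ k0 * vP α ^ k1)
      = (k0.factorial : ℂ) * (k1.factorial : ℂ) * (lam0 : ℂ) ^ k0 * (lam1 : ℂ) ^ k1 := by
  induction k0 with
  | zero =>
    simp only [pow_zero, one_mul, Nat.factorial_zero, Nat.cast_one]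
    rw [key_v α lam1 hc1]
    ring
  | succ a ih =>
    have hd : ∀ i : Fin 2, pderiv i (uP α ^ (a + 1) * vP α ^ k1)
        = C (((a : ℂ) + 1) * α 0 i) * (uP α ^ a * vP α ^ k1)
          + C ((k1 : ℂ) * α 1 i) * (uP α ^ (a + 1) * vP α ^ (k1 - 1)) := by
      intro i
      rw [pderiv_mul, pderiv_pow, pderiv_pow, pderiv_uP, pderiv_vP]
      simp only [Nat.add_sub_cancel]
      rw [show ((a + 1 : ℕ) : MP) = C ((a : ℂ) + 1) by
        rw [map_add, map_one, map_natCast]; exact Nat.cast_add_one _,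
        show ((k1 : ℕ) : MP) = C ((k1 : ℂ)) from (map_natCast (C : ℂ →+* MP) k1).symm,
        map_mul, map_mul]
      ring
    nth_rewrite 1 [pow_succ']
    rw [mul_assoc, pinner_uP_mul, hd 0, hd 1, pinner_add_right, pinner_add_right,
      pinner_C_mul_right, pinner_C_mul_right, pinner_C_mul_right, pinner_C_mul_right, ih]
    simp only [map_mul, map_add, Complex.conj_natCast, map_one]
    push_cast [Nat.factorial_succ]
    linear_combination
      (((a : ℂ) + 1) * (a.factorial : ℂ) * (k1.factorial : ℂ) * (lam0 : ℂ) ^ a *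
        (lam1 : ℂ) ^ k1) * hc0
      + ((k1 : ℂ) * pinner (uP α ^ a * vP α ^ k1) (uP α ^ (a + 1) * vP α ^ (k1 - 1))) * ho'

lemma coeff_prod (k0 k1 l0 l1 : ℕ) :
    coeff (LL l0 l1) (uP α ^ k0 * vP α ^ k1) =
      ∑ m ∈ squares k0 k1 l0 l1,
        ((k0.choose m.1 * k1.choose m.2.2.1 : ℕ) : ℂ) * α 0 0 ^ m.1 * α 0 1 ^ m.2.1 *
          α 1 0 ^ m.2.2.1 * α 1 1 ^ m.2.2.2 := by
  rw [uP, vP, linform_pow, linform_pow, Finset.sum_mul_sum]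
  simp only [monomial_mul, LL_add]
  rw [← Finset.sum_product']
  rw [MvPolynomial.coeff_sum]
  simp only [coeff_monomial]
  simp only [LL_inj]
  rw [← Finset.sum_filter]
  refine Finset.sum_nbij' (fun p => (p.1, k0 - p.1, p.2, k1 - p.2)) (fun m => (m.1, m.2.2.1))
    ?_ ?_ ?_ ?_ ?_
  · intro p hp
    simp only [Finset.mem_filter, Finset.mem_product, Finset.mem_range] at hp
    simp only [squares, Finset.mem_filter, Finset.mem_product, Finset.mem_range]
    omega
  · intro m hm
    simp only [squares, Finset.mem_filter, Finset.mem_product, Finset.mem_range] at hm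
    simp only [Finset.mem_filter, Finset.mem_product, Finset.mem_range]
    omega
  · intro p hp
    simp only [Finset.mem_filter, Finset.mem_product, Finset.mem_range] at hp
    rfl
  · intro m hm
    simp only [squares, Finset.mem_filter, Finset.mem_product, Finset.mem_range] at hm
    have h1 : k0 - m.1 = m.2.1 := by omega
    have h2 : k1 - m.2.2.1 = m.2.2.2 := by omega
    simp only [h1, h2]
  · intro p hp
    simp only [Finset.mem_filter, Finset.mem_product, Finset.mem_range] at hp
    push_cast
    ring

lemma support_subset (k0 k1 n : ℕ) (hk : k0 + k1 = n) :
    (uP α ^ k0 * vP α ^ k1).support ⊆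
      (Finset.range (n + 1)).image (fun l0 => LL l0 (n - l0)) := by
  have hu : (uP α).IsHomogeneous 1 :=
    ((isHomogeneous_X _ 0).C_mul _).add ((isHomogeneous_X _ 1).C_mul _)
  have hv : (vP α).IsHomogeneous 1 :=
    ((isHomogeneous_X _ 0).C_mul _).add ((isHomogeneous_X _ 1).C_mul _)
  have hP : (uP α ^ k0 * vP α ^ k1).IsHomogeneous n := by
    have := (hu.pow k0).mul (hv.pow k1)
    simpa [hk] using this
  intro m hm
  have hdeg : m.degree = n := by
    by_contra h
    exact MvPolynomial.mem_support_iff.mp hm (hP.coeff_eq_zero h)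
  have hsum : m 0 + m 1 = n := by
    rw [← hdeg, Finsupp.degree_apply]
    rw [Finset.sum_subset (Finset.subset_univ m.support) (fun i _ hi => by
      simpa using Finsupp.notMem_support_iff.mp hi)]
    exact (Fin.sum_univ_two m).symm
  refine Finset.mem_image.mpr ⟨m 0, Finset.mem_range.mpr (by omega), ?_⟩
  have h1 : n - m 0 = m 1 := by omega
  rw [h1]
  ext j
  fin_cases j
  · exact LL_apply0 _ _
  · exact LL_apply1 _ _

end main

lemma nat_id {k0 k1 l0 l1 m00 m01 m10 m11 : ℕ}
    (h1 : m00 + m01 = k0) (h2 : m10 + m11 = k1) (h3 : m00 + m10 = l0) (h4 : m01 + m11 = l1) :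
    k0.factorial * k1.factorial *
        (k0.choose m00 * k1.choose m10 * l0.choose m00 * l1.choose m01)
      = l0.factorial * l1.factorial * (k0.choose m00 * k1.choose m10) ^ 2 := by
  have e1 : k0.factorial = k0.choose m00 * m00.factorial * m01.factorial := by
    rw [show m01 = k0 - m00 by omega]
    exact (Nat.choose_mul_factorial_mul_factorial (by omega)).symm
  have e2 : k1.factorial = k1.choose m10 * m10.factorial * m11.factorial := by
    rw [show m11 = k1 - m10 by omega]
    exact (Nat.choose_mul_factorial_mul_factorial (by omega)).symm
  have e3 : l0.factorial = l0.choose m00 * m00.factorial * m10.factorial := by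
    rw [show m10 = l0 - m00 by omega]
    exact (Nat.choose_mul_factorial_mul_factorial (by omega)).symm
  have e4 : l1.factorial = l1.choose m01 * m01.factorial * m11.factorial := by
    rw [show m11 = l1 - m01 by omega]
    exact (Nat.choose_mul_factorial_mul_factorial (by omega)).symm
  rw [e1, e2, e3, e4]
  ring

lemma sqrt_id {k0 k1 l0 l1 m00 m01 m10 m11 : ℕ}
    (h1 : m00 + m01 = k0) (h2 : m10 + m11 = k1) (h3 : m00 + m10 = l0) (h4 : m01 + m11 = l1) :
    Real.sqrt ((k0.factorial * k1.factorial : ℕ)) *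
        Real.sqrt ((k0.choose m00 * k1.choose m10 * l0.choose m00 * l1.choose m01 : ℕ))
      = Real.sqrt ((l0.factorial * l1.factorial : ℕ)) *
          ((k0.choose m00 * k1.choose m10 : ℕ) : ℝ) := by
  rw [← Real.sqrt_mul (by positivity)]
  rw [show (((k0.choose m00 * k1.choose m10 : ℕ)) : ℝ)
    = Real.sqrt ((((k0.choose m00 * k1.choose m10 : ℕ)) : ℝ) ^ 2) from
      (Real.sqrt_sq (by positivity)).symm]
  rw [← Real.sqrt_mul (by positivity)]
  congr 1
  exact_mod_cast nat_id h1 h2 h3 h4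

lemma famp_eq (α : Fin 2 → Fin 2 → ℂ) (k0 k1 l0 l1 : ℕ) :
    (Real.sqrt ((k0.factorial * k1.factorial : ℕ)) : ℂ) * Famp k0 k1 l0 l1 α
      = (Real.sqrt ((l0.factorial * l1.factorial : ℕ)) : ℂ) *
          coeff (LL l0 l1) (uP α ^ k0 * vP α ^ k1) := by
  rw [coeff_prod, Famp, Finset.mul_sum, Finset.mul_sum]
  refine Finset.sum_congr rfl fun m hm => ?_
  simp only [squares, Finset.mem_filter, Finset.mem_product, Finset.mem_range] at hm
  obtain ⟨-, h1, h2, h3, h4⟩ := hm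
  have hr := sqrt_id h1 h2 h3 h4
  have hrC : ((Real.sqrt ((k0.factorial * k1.factorial : ℕ)) : ℝ) : ℂ) *
        ((Real.sqrt ((k0.choose m.1 * k1.choose m.2.2.1 * l0.choose m.1 * l1.choose m.2.1 : ℕ))
          : ℝ) : ℂ)
      = ((Real.sqrt ((l0.factorial * l1.factorial : ℕ)) : ℝ) : ℂ) *
          ((k0.choose m.1 * k1.choose m.2.2.1 : ℕ) : ℂ) := by
    exact_mod_cast congrArg Complex.ofReal hr
  linear_combination (α 0 0 ^ m.1 * α 0 1 ^ m.2.1 * α 1 0 ^ m.2.2.1 * α 1 1 ^ m.2.2.2) * hrC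

end Stmt3Aux
end Stmt3AuxSec

open Stmt3Aux MvPolynomial in
/-- 0-th moment (normalization): if the rows of `A = (α_{ab})` are orthogonal with
squared norms `λ0`, `λ1`, then for `k0 + k1 = n`,
`Σ_{l0+l1=n} |F(l0,l1)|^2 = λ0^k0 * λ1^k1`. -/
theorem stmt_3 (n : ℕ) (hn : 0 < n) (α : Fin 2 → Fin 2 → ℂ) (lam0 lam1 : ℝ)
    (h0 : ‖α 0 0‖ ^ 2 + ‖α 0 1‖ ^ 2 = lam0)
    (h1 : ‖α 1 0‖ ^ 2 + ‖α 1 1‖ ^ 2 = lam1)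
    (horth : α 0 0 * (starRingEnd ℂ) (α 1 0) + α 0 1 * (starRingEnd ℂ) (α 1 1) = 0)
    (k0 k1 : ℕ) (hk : k0 + k1 = n) :
    ∑ l0 ∈ Finset.range (n + 1), ‖Famp k0 k1 l0 (n - l0) α‖ ^ 2
      = lam0 ^ k0 * lam1 ^ k1 := by
  classical
  have hc0 : (starRingEnd ℂ) (α 0 0) * α 0 0 + (starRingEnd ℂ) (α 0 1) * α 0 1 = (lam0 : ℂ) := by
    rw [mul_comm, mul_comm ((starRingEnd ℂ) (α 0 1)) (α 0 1), Complex.mul_conj,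
      Complex.mul_conj, ← h0, ← Complex.sq_norm, ← Complex.sq_norm]
    push_cast
    ring
  have hc1 : (starRingEnd ℂ) (α 1 0) * α 1 0 + (starRingEnd ℂ) (α 1 1) * α 1 1 = (lam1 : ℂ) := by
    rw [mul_comm, mul_comm ((starRingEnd ℂ) (α 1 1)) (α 1 1), Complex.mul_conj,
      Complex.mul_conj, ← h1, ← Complex.sq_norm, ← Complex.sq_norm]
    push_cast
    ring
  have ho' : (starRingEnd ℂ) (α 1 0) * α 0 0 + (starRingEnd ℂ) (α 1 1) * α 0 1 = 0 := by
    linear_combination horth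
  set P : MP := uP α ^ k0 * vP α ^ k1 with hPdef
  have hkey : pinner P P
      = (k0.factorial : ℂ) * (k1.factorial : ℂ) * (lam0 : ℂ) ^ k0 * (lam1 : ℂ) ^ k1 :=
    key α lam0 lam1 hc0 hc1 ho' k0 k1
  have hsupp : P.support ⊆ (Finset.range (n + 1)).image (fun l0 => LL l0 (n - l0)) :=
    support_subset α k0 k1 n hk
  have hpp : pinner P P
      = ∑ l0 ∈ Finset.range (n + 1),
          ((((l0.factorial * (n - l0).factorial : ℕ) : ℝ) : ℂ) *
            ((‖coeff (LL l0 (n - l0)) P‖ ^ 2 : ℝ) : ℂ)) := by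
    rw [pinner_eq_sum P hsupp, Finset.sum_image (fun a _ b _ h => by
      rw [← LL_apply0 a (n - a), h, LL_apply0])]
    refine Finset.sum_congr rfl fun l0 _ => ?_
    rw [NN_LL, Complex.mul_conj, ← Complex.sq_norm]
    push_cast
    ring
  have habs : ∀ l0, ((k0.factorial * k1.factorial : ℕ) : ℝ) *
        ‖Famp k0 k1 l0 (n - l0) α‖ ^ 2
      = ((l0.factorial * (n - l0).factorial : ℕ) : ℝ) *
          ‖coeff (LL l0 (n - l0)) P‖ ^ 2 := by
    intro l0
    have hF := famp_eq α k0 k1 l0 (n - l0)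
    have := congrArg (fun z => ‖z‖ ^ 2) hF
    simp only [norm_mul, Complex.norm_real, Real.norm_eq_abs, mul_pow, sq_abs] at this
    rwa [Real.sq_sqrt (by positivity), Real.sq_sqrt (by positivity)] at this
  have hne : ((k0.factorial * k1.factorial : ℕ) : ℝ) ≠ 0 := by positivity
  refine mul_left_cancel₀ hne ?_
  rw [Finset.mul_sum]
  calc ∑ l0 ∈ Finset.range (n + 1), ((k0.factorial * k1.factorial : ℕ) : ℝ) *
          ‖Famp k0 k1 l0 (n - l0) α‖ ^ 2
      = ∑ l0 ∈ Finset.range (n + 1), ((l0.factorial * (n - l0).factorial : ℕ) : ℝ) *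
          ‖coeff (LL l0 (n - l0)) P‖ ^ 2 :=
        Finset.sum_congr rfl fun l0 _ => habs l0
    _ = ((k0.factorial * k1.factorial : ℕ) : ℝ) * (lam0 ^ k0 * lam1 ^ k1) := by
        have hc := hpp.symm.trans hkey
        have h2 : ∑ l0 ∈ Finset.range (n + 1), ((l0.factorial * (n - l0).factorial : ℕ) : ℝ) *
            ‖coeff (LL l0 (n - l0)) P‖ ^ 2
            = ((k0.factorial * k1.factorial : ℕ) : ℝ) * lam0 ^ k0 * lam1 ^ k1 := by
          exact_mod_cast hc
        rw [h2]
        ring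
end

section
/- With the setting of the previous statement (A a 2x2 complex matrix with A A† diagonal, eigenvalues λ_0 = |α_{00}|^2 + |α_{01}|^2 and λ_1 = |α_{10}|^2 + |α_{11}|^2, fixed k0 + k1 = n, and F(l0,l1) the multinomial interference amplitude), the first moment satisfies Σ_{l0 + l1 = n} l0 * |F(l0, l1)|^2 = λ_0^{k0} λ_1^{k1} * ( k0 * |α_{00}|^2 / λ_0 + k1 * |α_{10}|^2 / λ_1 ), assuming λ_0 > 0 and λ_1 > 0. -/
open Finset
open Polynomial

noncomputable def PP (a b c d : ℂ) (p q : ℕ) : Polynomial ℂ :=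
  (C a * X + C b) ^ p * (C c * X + C d) ^ q

noncomputable def w (a b c d : ℂ) (p q l : ℕ) : ℂ := (PP a b c d p q).coeff l

noncomputable def ip (n : ℕ) (f g : ℕ → ℂ) : ℂ :=
  ∑ l ∈ range (n + 1), ((Nat.factorial l * Nat.factorial (n - l) : ℕ) : ℂ) * (starRingEnd ℂ) (f l) * g l

variable {a b c d : ℂ}

lemma wdeg {p q l : ℕ} (h : p + q < l) : w a b c d p q l = 0 := by
  apply coeff_eq_zero_of_natDegree_lt
  refine lt_of_le_of_lt ?_ h
  have hlin : ∀ u v : ℂ, natDegree (C u * X + C v) ≤ 1 := by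
    intro u v
    refine le_trans (natDegree_add_le _ _) ?_
    simp only [natDegree_C, max_le_iff]
    constructor
    · exact le_trans natDegree_mul_le (by simp)
    · omega
  refine le_trans (natDegree_mul_le) (add_le_add ?_ ?_) <;>
  · refine le_trans (natDegree_pow_le) ?_
    calc _ ≤ _ * 1 := Nat.mul_le_mul_left _ (hlin _ _)
    _ = _ := Nat.mul_one _

lemma w_zero {l : ℕ} : w a b c d 0 0 l = if l = 0 then 1 else 0 := by
  simp [w, PP, coeff_one]

lemma w_succ_p {p q l : ℕ} :
    w a b c d (p+1) q l = a * (if l = 0 then 0 else w a b c d p q (l-1)) + b * w a b c d p q l := by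
  have h : PP a b c d (p+1) q = C a * (X * PP a b c d p q) + C b * PP a b c d p q := by
    unfold PP; ring
  cases l with
  | zero => simp [w, h]
  | succ l => simp [w, h, coeff_X_mul]

lemma w_succ_q {q l : ℕ} :
    w a b c d 0 (q+1) l = c * (if l = 0 then 0 else w a b c d 0 q (l-1)) + d * w a b c d 0 q l := by
  have h : PP a b c d 0 (q+1) = C c * (X * PP a b c d 0 q) + C d * PP a b c d 0 q := by
    unfold PP; ring
  cases l with
  | zero => simp [w, h]
  | succ l => simp [w, h, coeff_X_mul]

lemma dPP (p q : ℕ) :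
    derivative (PP a b c d p q) =
      C ((p : ℂ) * a) * PP a b c d (p-1) q + C ((q : ℂ) * c) * PP a b c d p (q-1) := by
  unfold PP
  rw [derivative_mul, derivative_pow, derivative_pow]
  simp only [derivative_add, derivative_C, derivative_mul, derivative_X, add_zero, mul_one,
    zero_add, mul_zero, zero_mul, map_mul]
  ring

lemma dxw {p q l : ℕ} :
    ((l : ℂ) + 1) * w a b c d p q (l+1) =
      (p : ℂ) * a * w a b c d (p-1) q l + (q : ℂ) * c * w a b c d p (q-1) l := by
  have h := coeff_derivative (PP a b c d p q) l
  rw [dPP] at h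
  simp only [coeff_add, coeff_C_mul] at h
  unfold w
  push_cast at h ⊢
  linear_combination -h

lemma XdPP (p q : ℕ) :
    C ((p : ℂ) + q) * PP a b c d p q - X * derivative (PP a b c d p q) =
      C ((p : ℂ) * b) * PP a b c d (p-1) q + C ((q : ℂ) * d) * PP a b c d p (q-1) := by
  rw [dPP]
  cases p with
  | zero =>
    cases q with
    | zero => simp [PP]
    | succ q =>
      simp only [Nat.add_one_sub_one, PP]
      push_cast
      simp only [C_add, C_mul, C_1, C_0]
      ring
  | succ p =>
    cases q with
    | zero =>
      simp only [Nat.add_one_sub_one, PP]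
      push_cast
      simp only [C_add, C_mul, C_1, C_0]
      ring
    | succ q =>
      simp only [Nat.add_one_sub_one, PP]
      push_cast
      simp only [C_add, C_mul, C_1, C_0]
      ring

lemma dyw {p q l : ℕ} :
    (((p : ℂ) + q) - l) * w a b c d p q l =
      (p : ℂ) * b * w a b c d (p-1) q l + (q : ℂ) * d * w a b c d p (q-1) l := by
  have h := congrArg (fun P => coeff P l) (XdPP (a := a) (b := b) (c := c) (d := d) p q)
  simp only [coeff_sub, coeff_add, coeff_C_mul] at h
  have hx : (X * derivative (PP a b c d p q)).coeff l = (l : ℂ) * (PP a b c d p q).coeff l := by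
    cases l with
    | zero => simp
    | succ l => rw [coeff_X_mul, coeff_derivative]; push_cast; ring
  rw [hx] at h
  unfold w
  linear_combination h

lemma ip_addsmul_left {m : ℕ} (x y : ℂ) (U V G : ℕ → ℂ) :
    ip m (fun l => x * U l + y * V l) G =
      (starRingEnd ℂ) x * ip m U G + (starRingEnd ℂ) y * ip m V G := by
  unfold ip
  rw [mul_sum, mul_sum, ← sum_add_distrib]
  refine sum_congr rfl fun l _ => ?_
  simp only [map_add, map_mul]
  ring

lemma ip_addsmul_right {m : ℕ} (x y : ℂ) (F U V : ℕ → ℂ) :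
    ip m F (fun l => x * U l + y * V l) = x * ip m F U + y * ip m F V := by
  unfold ip
  rw [mul_sum, mul_sum, ← sum_add_distrib]
  refine sum_congr rfl fun l _ => ?_
  ring

lemma ip_conj {m : ℕ} (F G : ℕ → ℂ) : ip m F G = (starRingEnd ℂ) (ip m G F) := by
  unfold ip
  rw [map_sum]
  refine sum_congr rfl fun l _ => ?_
  simp only [map_mul, Complex.conj_conj, map_natCast]
  ring

lemma ip_adjoint {n : ℕ} (F G : ℕ → ℂ) :
    ip (n+1) (fun l => if l = 0 then 0 else F (l-1)) G
      = ip n F (fun l => ((l : ℂ) + 1) * G (l+1)) := by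
  unfold ip
  rw [Finset.sum_range_succ']
  simp only [reduceIte, map_zero, mul_zero, zero_mul, add_zero]
  refine sum_congr rfl fun l _ => ?_
  simp only [Nat.add_sub_cancel, if_neg (Nat.succ_ne_zero l)]
  have h1 : Nat.factorial (l+1) = (l+1) * Nat.factorial l := rfl
  have h2 : n + 1 - (l + 1) = n - l := by omega
  rw [h1, h2]
  push_cast
  ring

lemma ip_y {n : ℕ} (F G : ℕ → ℂ) (hF : F (n+1) = 0) :
    ip (n+1) F G = ip n F (fun l => (((n : ℂ) + 1) - l) * G l) := by
  unfold ip
  rw [Finset.sum_range_succ, hF]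
  simp only [map_zero, mul_zero, zero_mul, add_zero]
  refine sum_congr rfl fun l hl => ?_
  rw [mem_range] at hl
  have h2 : n + 1 - l = (n - l) + 1 := by omega
  have h1 : Nat.factorial ((n-l)+1) = ((n-l)+1) * Nat.factorial (n-l) := rfl
  rw [h2, h1]
  have h3 : ((n : ℂ) + 1) - l = ((n - l : ℕ) : ℂ) + 1 := by
    rw [Nat.cast_sub (by omega : l ≤ n)]
    ring
  rw [h3]
  push_cast
  ring

lemma ip_smul_right {m : ℕ} (x : ℂ) (F U : ℕ → ℂ) :
    ip m F (fun l => x * U l) = x * ip m F U := by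
  unfold ip
  rw [mul_sum]
  refine sum_congr rfl fun l _ => ?_
  ring

variable {lam0 lam1 : ℝ}

lemma main_orth
    (h0 : (starRingEnd ℂ) a * a + (starRingEnd ℂ) b * b = (lam0 : ℂ))
    (h1 : (starRingEnd ℂ) c * c + (starRingEnd ℂ) d * d = (lam1 : ℂ))
    (ho : (starRingEnd ℂ) a * c + (starRingEnd ℂ) b * d = 0) :
    ∀ n p q p' q', p + q = n → p' + q' = n →
      ip n (w a b c d p q) (w a b c d p' q') =
        if p = p' then ((Nat.factorial p * Nat.factorial q : ℕ) : ℂ) * (lam0:ℂ)^p * (lam1:ℂ)^q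
        else 0 := by
  intro n
  induction n with
  | zero =>
    intro p q p' q' hpq hpq'
    obtain ⟨rfl, rfl⟩ : p = 0 ∧ q = 0 := by omega
    obtain ⟨rfl, rfl⟩ : p' = 0 ∧ q' = 0 := by omega
    simp [ip, w_zero]
  | succ n IH =>
    have key : ∀ p q p' q', p + 1 + q = n + 1 → p' + q' = n + 1 →
        ip (n+1) (w a b c d (p+1) q) (w a b c d p' q') =
          if p + 1 = p' then
            ((Nat.factorial (p+1) * Nat.factorial q : ℕ) : ℂ) * (lam0:ℂ)^(p+1) * (lam1:ℂ)^q
          else 0 := by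
      intro p q p' q' hpq hpq'
      have hw : w a b c d (p+1) q =
          fun l => a * (if l = 0 then 0 else w a b c d p q (l-1)) + b * w a b c d p q l :=
        funext fun l => w_succ_p
      rw [hw, ip_addsmul_left, ip_adjoint, ip_y _ _ (wdeg (by omega))]
      have hdx : (fun (l : ℕ) => ((l:ℂ)+1) * w a b c d p' q' (l+1)) =
          fun l => ((p':ℂ) * a) * w a b c d (p'-1) q' l + ((q':ℂ) * c) * w a b c d p' (q'-1) l := by
        funext l; rw [dxw]
      have hdy : (fun (l : ℕ) => (((n:ℂ)+1) - l) * w a b c d p' q' l) =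
          fun l => ((p':ℂ) * b) * w a b c d (p'-1) q' l + ((q':ℂ) * d) * w a b c d p' (q'-1) l := by
        funext l
        have hn : ((n:ℂ)+1) = ((p':ℂ) + q') := by
          have : ((p' + q' : ℕ) : ℂ) = ((n + 1 : ℕ) : ℂ) := by rw [hpq']
          push_cast at this
          linear_combination -this
        rw [hn, dyw]
      rw [hdx, hdy, ip_addsmul_right, ip_addsmul_right]
      set N1 := ip n (w a b c d p q) (w a b c d (p'-1) q') with hN1
      set N2 := ip n (w a b c d p q) (w a b c d p' (q'-1)) with hN2
      cases p' with
      | zero =>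
        rw [if_neg (by omega)]
        push_cast
        linear_combination ((q':ℂ)) * N2 * ho
      | succ p' =>
        have hN1v : N1 = if p = p' then
            ((Nat.factorial p * Nat.factorial q : ℕ) : ℂ) * (lam0:ℂ)^p * (lam1:ℂ)^q else 0 := by
          rw [hN1]
          simp only [Nat.succ_sub_one]
          exact IH p q p' q' (by omega) (by omega)
        cases q' with
        | zero =>
          by_cases hpp : p = p'
          · subst hpp
            obtain rfl : q = 0 := by omega
            rw [hN1v, if_pos rfl]
            rw [if_pos rfl, Nat.factorial_succ]
            simp only [Nat.factorial_zero]
            push_cast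
            linear_combination ((p:ℂ)+1) * ((Nat.factorial p : ℕ) : ℂ) * (lam0:ℂ)^p * h0
          · rw [hN1v, if_neg hpp]
            rw [if_neg (show ¬(p + 1 = p' + 1) by omega)]
            push_cast
            ring
        | succ q' =>
          have hN2v : N2 = if p = p' + 1 then
              ((Nat.factorial p * Nat.factorial q : ℕ) : ℂ) * (lam0:ℂ)^p * (lam1:ℂ)^q else 0 := by
            rw [hN2]
            simp only [Nat.succ_sub_one]
            exact IH p q (p'+1) q' (by omega) (by omega)
          by_cases hpp : p = p'
          · subst hpp
            obtain rfl : q = q' + 1 := by omega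
            rw [hN1v, hN2v, if_pos rfl, if_neg (show ¬(p = p + 1) by omega)]
            rw [if_pos rfl, Nat.factorial_succ p]
            push_cast
            linear_combination ((p:ℂ)+1) * ((Nat.factorial p : ℕ) : ℂ) * ((Nat.factorial (q'+1) : ℕ) : ℂ) * (lam0:ℂ)^p * (lam1:ℂ)^(q'+1) * h0
          · rw [hN1v, hN2v, if_neg hpp]
            by_cases hpp2 : p = p' + 1
            · rw [if_pos hpp2]
              rw [if_neg (show ¬(p + 1 = p' + 1) by omega)]
              push_cast
              linear_combination ((q':ℂ)+1) * ((Nat.factorial p : ℕ) : ℂ) * ((Nat.factorial q : ℕ) : ℂ) * (lam0:ℂ)^p * (lam1:ℂ)^q * ho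
            · rw [if_neg hpp2]
              rw [if_neg (show ¬(p + 1 = p' + 1) by omega)]
              push_cast
              ring
    intro p q p' q' hpq hpq'
    cases p with
    | succ p => exact key p q p' q' hpq hpq'
    | zero =>
      cases p' with
      | succ p' =>
        rw [ip_conj, key p' q' 0 q hpq' hpq, if_neg (by omega), if_neg (by omega), map_zero]
      | zero =>
        obtain rfl : q = n + 1 := by omega
        obtain rfl : q' = n + 1 := by omega
        have hw : w a b c d 0 (n+1) =
            fun l => c * (if l = 0 then 0 else w a b c d 0 n (l-1)) + d * w a b c d 0 n l :=
          funext fun l => w_succ_q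
        have step1 : ip (n+1) (w a b c d 0 (n+1)) (w a b c d 0 (n+1)) =
            ip (n+1) (fun l => c * (if l = 0 then 0 else w a b c d 0 n (l-1)) + d * w a b c d 0 n l)
              (w a b c d 0 (n+1)) :=
          congrArg (fun f => ip (n+1) f (w a b c d 0 (n+1))) hw
        rw [step1, ip_addsmul_left, ip_adjoint, ip_y _ _ (wdeg (by omega))]
        have hdx : (fun (l : ℕ) => ((l:ℂ)+1) * w a b c d 0 (n+1) (l+1)) =
            fun l => (((n:ℂ)+1) * c) * w a b c d 0 n l := by
          funext l
          have h := dxw (a := a) (b := b) (c := c) (d := d) (p := 0) (q := n+1) (l := l)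
          simp only [Nat.cast_zero, zero_mul, zero_add, Nat.succ_sub_one] at h
          push_cast at h ⊢
          linear_combination h
        have hdy : (fun (l : ℕ) => (((n:ℂ)+1) - l) * w a b c d 0 (n+1) l) =
            fun l => (((n:ℂ)+1) * d) * w a b c d 0 n l := by
          funext l
          have h := dyw (a := a) (b := b) (c := c) (d := d) (p := 0) (q := n+1) (l := l)
          simp only [Nat.cast_zero, zero_mul, zero_add, Nat.succ_sub_one] at h
          push_cast at h ⊢
          linear_combination h
        rw [hdx, hdy, ip_smul_right, ip_smul_right]
        have hN : ip n (w a b c d 0 n) (w a b c d 0 n) =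
            ((Nat.factorial 0 * Nat.factorial n : ℕ) : ℂ) * (lam0:ℂ)^0 * (lam1:ℂ)^n := by
          have := IH 0 n 0 n (by omega) (by omega)
          rwa [if_pos rfl] at this
        rw [hN, if_pos rfl, Nat.factorial_succ]
        simp only [Nat.factorial_zero]
        push_cast
        linear_combination ((n:ℂ)+1) * ((Nat.factorial n : ℕ) : ℂ) * (lam1:ℂ)^n * h1

lemma moment
    (h0 : (starRingEnd ℂ) a * a + (starRingEnd ℂ) b * b = (lam0 : ℂ))
    (h1 : (starRingEnd ℂ) c * c + (starRingEnd ℂ) d * d = (lam1 : ℂ))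
    (ho : (starRingEnd ℂ) a * c + (starRingEnd ℂ) b * d = 0)
    (m k0 k1 : ℕ) (hk : k0 + k1 = m + 1) :
    ∑ l ∈ range (m + 1 + 1),
        (l : ℂ) * ((Nat.factorial l * Nat.factorial (m + 1 - l) : ℕ) : ℂ) *
          (starRingEnd ℂ) (w a b c d k0 k1 l) * w a b c d k0 k1 l
      = (k0:ℂ)^2 * ((starRingEnd ℂ) a * a) *
          ((Nat.factorial (k0-1) * Nat.factorial k1 : ℕ) : ℂ) * (lam0:ℂ)^(k0-1) * (lam1:ℂ)^k1
        + (k1:ℂ)^2 * ((starRingEnd ℂ) c * c) *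
          ((Nat.factorial k0 * Nat.factorial (k1-1) : ℕ) : ℂ) * (lam0:ℂ)^k0 * (lam1:ℂ)^(k1-1) := by
  have e1 : ∑ l ∈ range (m + 1 + 1),
        (l : ℂ) * ((Nat.factorial l * Nat.factorial (m + 1 - l) : ℕ) : ℂ) *
          (starRingEnd ℂ) (w a b c d k0 k1 l) * w a b c d k0 k1 l
      = ip (m+1) (w a b c d k0 k1)
          (fun l => if l = 0 then 0 else ((fun (j : ℕ) => ((j:ℂ)+1) * w a b c d k0 k1 (j+1)) (l-1))) := by
    unfold ip
    refine sum_congr rfl fun l _ => ?_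
    cases l with
    | zero => simp
    | succ j =>
      simp only [Nat.succ_sub_one, if_neg (Nat.succ_ne_zero j)]
      push_cast
      ring
  rw [e1, ip_conj,
    ip_adjoint (fun (j : ℕ) => ((j:ℂ)+1) * w a b c d k0 k1 (j+1)) (w a b c d k0 k1)]
  have hD : (fun (l : ℕ) => ((l:ℂ)+1) * w a b c d k0 k1 (l+1)) =
      fun l => ((k0:ℂ) * a) * w a b c d (k0-1) k1 l + ((k1:ℂ) * c) * w a b c d k0 (k1-1) l := by
    funext l; rw [dxw]
  rw [hD, ip_addsmul_left, ip_addsmul_right, ip_addsmul_right]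
  rcases Nat.eq_zero_or_pos k0 with hk0 | hk0
  · subst hk0
    obtain rfl : k1 = m + 1 := by omega
    have hN4 : ip m (w a b c d 0 (m+1-1)) (w a b c d 0 (m+1-1)) =
        ((Nat.factorial 0 * Nat.factorial m : ℕ) : ℂ) * (lam0:ℂ)^0 * (lam1:ℂ)^m := by
      have := main_orth h0 h1 ho m 0 m 0 m (by omega) (by omega)
      simpa using this
    simp only [Nat.succ_sub_one] at hN4 ⊢
    rw [hN4]
    simp only [Nat.cast_zero, Nat.factorial_zero, Nat.cast_ofNat]
    push_cast
    simp only [map_add, map_mul, map_pow, Complex.conj_conj, map_natCast, Complex.conj_ofReal,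
      map_zero, map_one]
    ring
  rcases Nat.eq_zero_or_pos k1 with hk1 | hk1
  · subst hk1
    obtain rfl : k0 = m + 1 := by omega
    have hN1 : ip m (w a b c d (m+1-1) 0) (w a b c d (m+1-1) 0) =
        ((Nat.factorial m * Nat.factorial 0 : ℕ) : ℂ) * (lam0:ℂ)^m * (lam1:ℂ)^0 := by
      have := main_orth h0 h1 ho m m 0 m 0 (by omega) (by omega)
      simpa using this
    simp only [Nat.succ_sub_one] at hN1 ⊢
    rw [hN1]
    simp only [Nat.cast_zero, Nat.factorial_zero]
    push_cast
    simp only [map_add, map_mul, map_pow, Complex.conj_conj, map_natCast, Complex.conj_ofReal,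
      map_zero, map_one]
    ring
  obtain ⟨K, rfl⟩ : ∃ K, k0 = K + 1 := ⟨k0 - 1, by omega⟩
  obtain ⟨L, rfl⟩ : ∃ L, k1 = L + 1 := ⟨k1 - 1, by omega⟩
  simp only [Nat.succ_sub_one]
  have hN1 : ip m (w a b c d K (L+1)) (w a b c d K (L+1)) =
      ((Nat.factorial K * Nat.factorial (L+1) : ℕ) : ℂ) * (lam0:ℂ)^K * (lam1:ℂ)^(L+1) := by
    have := main_orth h0 h1 ho m K (L+1) K (L+1) (by omega) (by omega)
    rwa [if_pos rfl] at this
  have hN2 : ip m (w a b c d K (L+1)) (w a b c d (K+1) L) = 0 := by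
    have := main_orth h0 h1 ho m K (L+1) (K+1) L (by omega) (by omega)
    rwa [if_neg (by omega)] at this
  have hN3 : ip m (w a b c d (K+1) L) (w a b c d K (L+1)) = 0 := by
    have := main_orth h0 h1 ho m (K+1) L K (L+1) (by omega) (by omega)
    rwa [if_neg (by omega)] at this
  have hN4 : ip m (w a b c d (K+1) L) (w a b c d (K+1) L) =
      ((Nat.factorial (K+1) * Nat.factorial L : ℕ) : ℂ) * (lam0:ℂ)^(K+1) * (lam1:ℂ)^L := by
    have := main_orth h0 h1 ho m (K+1) L (K+1) L (by omega) (by omega)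
    rwa [if_pos rfl] at this
  rw [hN1, hN2, hN3, hN4]
  push_cast
  simp only [map_add, map_mul, map_pow, Complex.conj_conj, map_natCast, Complex.conj_ofReal,
    map_zero, map_one]
  ring

lemma coeff_lin_pow (u v : ℂ) (p j : ℕ) :
    ((C u * X + C v) ^ p).coeff j =
      if j ≤ p then ((p.choose j : ℕ) : ℂ) * u ^ j * v ^ (p - j) else 0 := by
  rw [add_pow, finset_sum_coeff]
  have hterm : ∀ k ∈ range (p+1),
      ((C u * X) ^ k * C v ^ (p - k) * ((p.choose k : ℕ) : ℂ[X])).coeff j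
        = if k = j then ((p.choose k : ℕ) : ℂ) * u ^ k * v ^ (p - k) else 0 := by
    intro k _
    have e : (C u * X) ^ k * C v ^ (p - k) * ((p.choose k : ℕ) : ℂ[X])
        = C (u ^ k) * X ^ k * C (v ^ (p - k)) * C ((p.choose k : ℕ) : ℂ) := by
      rw [mul_pow, ← C_pow, ← C_pow, C_eq_natCast]
    rw [e, coeff_mul_C, coeff_mul_C, coeff_C_mul, coeff_X_pow]
    by_cases h : j = k
    · subst h; simp; ring
    · rw [if_neg h, if_neg (fun hh => h hh.symm)]; ring
  rw [sum_congr rfl hterm, Finset.sum_ite_eq' (range (p+1)) j]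
  simp only [mem_range, Nat.lt_succ_iff]

lemma w_as_sum (p q l0 l1 : ℕ) (hl : l0 + l1 = p + q) :
    w a b c d p q l0 = ∑ m ∈ squares p q l0 l1,
      ((p.choose m.1 * q.choose m.2.2.1 : ℕ) : ℂ) *
        a ^ m.1 * b ^ m.2.1 * c ^ m.2.2.1 * d ^ m.2.2.2 := by
  unfold w PP
  rw [coeff_mul, Finset.Nat.sum_antidiagonal_eq_sum_range_succ_mk]
  have hterm : ∀ i ∈ range (l0+1),
      ((C a * X + C b) ^ p).coeff i * ((C c * X + C d) ^ q).coeff (l0 - i)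
        = if i ≤ p ∧ l0 - i ≤ q then
            ((p.choose i : ℕ) : ℂ) * a ^ i * b ^ (p - i) *
              (((q.choose (l0 - i) : ℕ)) : ℂ) * c ^ (l0 - i) * d ^ (q - (l0 - i))
          else 0 := by
    intro i _
    rw [coeff_lin_pow, coeff_lin_pow]
    by_cases h1 : i ≤ p <;> by_cases h2 : l0 - i ≤ q <;> simp [h1, h2] <;> ring
  rw [sum_congr rfl hterm, ← sum_filter]
  refine Finset.sum_nbij' (fun i => (i, p - i, l0 - i, q - (l0 - i))) (fun m => m.1)
    ?_ ?_ ?_ ?_ ?_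
  · intro i hi
    simp only [mem_filter, mem_range] at hi
    simp only [squares, mem_filter, mem_product, mem_range]
    refine ⟨⟨by omega, by omega, by omega, by omega⟩, by omega, by omega, by omega, by omega⟩
  · intro m hm
    simp only [squares, mem_filter, mem_product, mem_range] at hm
    simp only [mem_filter, mem_range]
    omega
  · intro i hi; rfl
  · intro m hm
    simp only [squares, mem_filter, mem_product, mem_range] at hm
    obtain ⟨-, h1, h2, h3, h4⟩ := hm
    ext <;> simp <;> omega
  · intro i hi
    simp only [mem_filter, mem_range] at hi
    push_cast
    ring

lemma sqrt_term (k0 k1 l0 l1 A B' C' D' : ℕ) (hk : k0 + k1 = l0 + l1)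
    (h1 : A + B' = k0) (h2 : C' + D' = k1) (h3 : A + C' = l0) (h4 : B' + D' = l1) :
    Real.sqrt ((k0.choose A * k1.choose C' * l0.choose A * l1.choose B' : ℕ)) *
        ((Nat.factorial k0 * Nat.factorial k1 : ℕ) : ℝ)
      = Real.sqrt ((Nat.factorial k0 * Nat.factorial k1 * Nat.factorial l0 * Nat.factorial l1 : ℕ))
        * ((k0.choose A * k1.choose C' : ℕ) : ℝ) := by
  have e1 : k0.choose A * (Nat.factorial A * Nat.factorial B') = Nat.factorial k0 := by
    have := Nat.choose_mul_factorial_mul_factorial (show A ≤ k0 by omega)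
    have hb : k0 - A = B' := by omega
    rw [hb] at this
    linarith [this]
  have e2 : k1.choose C' * (Nat.factorial C' * Nat.factorial D') = Nat.factorial k1 := by
    have := Nat.choose_mul_factorial_mul_factorial (show C' ≤ k1 by omega)
    have hb : k1 - C' = D' := by omega
    rw [hb] at this
    linarith [this]
  have e3 : l0.choose A * (Nat.factorial A * Nat.factorial C') = Nat.factorial l0 := by
    have := Nat.choose_mul_factorial_mul_factorial (show A ≤ l0 by omega)
    have hb : l0 - A = C' := by omega
    rw [hb] at this
    linarith [this]
  have e4 : l1.choose B' * (Nat.factorial B' * Nat.factorial D') = Nat.factorial l1 := by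
    have := Nat.choose_mul_factorial_mul_factorial (show B' ≤ l1 by omega)
    have hb : l1 - B' = D' := by omega
    rw [hb] at this
    linarith [this]
  set D2 : ℕ := Nat.factorial A * Nat.factorial B' * Nat.factorial C' * Nat.factorial D' with hD2
  have natid : (k0.choose A * k1.choose C' * l0.choose A * l1.choose B') * D2 ^ 2
      = Nat.factorial k0 * Nat.factorial k1 * Nat.factorial l0 * Nat.factorial l1 := by
    rw [← e1, ← e2, ← e3, ← e4, hD2]
    ring
  have e5 : Nat.factorial k0 * Nat.factorial k1 = (k0.choose A * k1.choose C') * D2 := by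
    rw [← e1, ← e2, hD2]
    ring
  have key : Real.sqrt ((k0.choose A * k1.choose C' * l0.choose A * l1.choose B' : ℕ)) * (D2 : ℝ)
      = Real.sqrt ((Nat.factorial k0 * Nat.factorial k1 * Nat.factorial l0 * Nat.factorial l1 : ℕ)) := by
    rw [← Real.sqrt_sq (by positivity : (0:ℝ) ≤ (D2:ℝ)), ← Real.sqrt_mul (by positivity)]
    congr 1
    push_cast [← natid]
    ring
  calc Real.sqrt ((k0.choose A * k1.choose C' * l0.choose A * l1.choose B' : ℕ)) *
        ((Nat.factorial k0 * Nat.factorial k1 : ℕ) : ℝ)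
      = (Real.sqrt ((k0.choose A * k1.choose C' * l0.choose A * l1.choose B' : ℕ)) * (D2:ℝ)) *
          ((k0.choose A * k1.choose C' : ℕ) : ℝ) := by
        rw [e5]; push_cast; ring
    _ = _ := by rw [key]

lemma Famp_eq (α : Fin 2 → Fin 2 → ℂ) (n k0 k1 l0 : ℕ) (hk : k0 + k1 = n) (hl : l0 ≤ n) :
    Famp k0 k1 l0 (n - l0) α =
      ((Real.sqrt ((Nat.factorial k0 * Nat.factorial k1 * Nat.factorial l0 *
          Nat.factorial (n - l0) : ℕ)) / ((Nat.factorial k0 * Nat.factorial k1 : ℕ) : ℝ) : ℝ) : ℂ) *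
        w (α 0 0) (α 0 1) (α 1 0) (α 1 1) k0 k1 l0 := by
  rw [w_as_sum k0 k1 l0 (n - l0) (by omega)]
  unfold Famp
  rw [mul_sum]
  refine sum_congr rfl fun m hm => ?_
  simp only [squares, mem_filter, mem_product, mem_range] at hm
  obtain ⟨-, h1, h2, h3, h4⟩ := hm
  have hst := sqrt_term k0 k1 l0 (n - l0) m.1 m.2.1 m.2.2.1 m.2.2.2 (by omega) h1 h2 h3 h4
  have hfac : ((Nat.factorial k0 * Nat.factorial k1 : ℕ) : ℝ) > 0 := by positivity
  have hr : (Real.sqrt ((Nat.choose k0 m.1 * Nat.choose k1 m.2.2.1 *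
        Nat.choose l0 m.1 * Nat.choose (n - l0) m.2.1 : ℕ)) : ℝ)
      = Real.sqrt ((Nat.factorial k0 * Nat.factorial k1 * Nat.factorial l0 *
          Nat.factorial (n - l0) : ℕ)) / ((Nat.factorial k0 * Nat.factorial k1 : ℕ) : ℝ) *
        ((k0.choose m.1 * k1.choose m.2.2.1 : ℕ) : ℝ) := by
    rw [div_mul_eq_mul_div, eq_div_iff (ne_of_gt hfac)]
    linarith [hst]
  rw [hr]
  push_cast
  ring


/-- First moment: with `A A†` diagonal with positive entries `λ0, λ1` and `k0 + k1 = n`,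
`Σ_{l0+l1=n} l0 |F(l0,l1)|^2 = λ0^k0 λ1^k1 (k0 |α00|^2/λ0 + k1 |α10|^2/λ1)`. -/
theorem stmt_4 (n : ℕ) (hn : 0 < n) (α : Fin 2 → Fin 2 → ℂ) (lam0 lam1 : ℝ)
    (h0 : ‖α 0 0‖ ^ 2 + ‖α 0 1‖ ^ 2 = lam0)
    (h1 : ‖α 1 0‖ ^ 2 + ‖α 1 1‖ ^ 2 = lam1)
    (horth : α 0 0 * (starRingEnd ℂ) (α 1 0) + α 0 1 * (starRingEnd ℂ) (α 1 1) = 0)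
    (hl0 : 0 < lam0) (hl1 : 0 < lam1)
    (k0 k1 : ℕ) (hk : k0 + k1 = n) :
    ∑ l0 ∈ Finset.range (n + 1),
        (l0 : ℝ) * ‖Famp k0 k1 l0 (n - l0) α‖ ^ 2
      = lam0 ^ k0 * lam1 ^ k1 *
        (k0 * ‖α 0 0‖ ^ 2 / lam0 + k1 * ‖α 1 0‖ ^ 2 / lam1) := by
  have hz : ∀ z : ℂ, (starRingEnd ℂ) z * z = ((‖z‖ ^ 2 : ℝ) : ℂ) := by
    intro z
    rw [mul_comm, Complex.mul_conj]
    norm_cast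
    rw [Complex.sq_norm]
  have h0C : (starRingEnd ℂ) (α 0 0) * (α 0 0) + (starRingEnd ℂ) (α 0 1) * (α 0 1) = (lam0:ℂ) := by
    rw [hz, hz, ← Complex.ofReal_add, h0]
  have h1C : (starRingEnd ℂ) (α 1 0) * (α 1 0) + (starRingEnd ℂ) (α 1 1) * (α 1 1) = (lam1:ℂ) := by
    rw [hz, hz, ← Complex.ofReal_add, h1]
  have hoC : (starRingEnd ℂ) (α 0 0) * (α 1 0) + (starRingEnd ℂ) (α 0 1) * (α 1 1) = 0 := by
    have := congrArg (starRingEnd ℂ) horth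
    simpa [map_add, map_mul, Complex.conj_conj] using this
  obtain ⟨m, rfl⟩ : ∃ m, n = m + 1 := ⟨n - 1, by omega⟩
  have M := moment h0C h1C hoC m k0 k1 hk
  set a := α 0 0
  set b := α 0 1
  set c := α 1 0
  set d := α 1 1
  have keyR : ∑ l ∈ range (m + 1 + 1),
        (l:ℝ) * ((Nat.factorial l * Nat.factorial (m + 1 - l) : ℕ) : ℝ) *
          Complex.normSq (w a b c d k0 k1 l)
      = (k0:ℝ)^2 * ‖a‖ ^ 2 *
          ((Nat.factorial (k0-1) * Nat.factorial k1 : ℕ) : ℝ) * lam0^(k0-1) * lam1^k1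
        + (k1:ℝ)^2 * ‖c‖ ^ 2 *
          ((Nat.factorial k0 * Nat.factorial (k1-1) : ℕ) : ℝ) * lam0^k0 * lam1^(k1-1) := by
    apply Complex.ofReal_injective
    rw [Complex.ofReal_sum]
    have hterm : ∀ l ∈ range (m + 1 + 1),
        (((l:ℝ) * ((Nat.factorial l * Nat.factorial (m + 1 - l) : ℕ) : ℝ) *
          Complex.normSq (w a b c d k0 k1 l) : ℝ) : ℂ)
          = (l : ℂ) * ((Nat.factorial l * Nat.factorial (m + 1 - l) : ℕ) : ℂ) *
            (starRingEnd ℂ) (w a b c d k0 k1 l) * w a b c d k0 k1 l := by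
      intro l _
      push_cast
      rw [Complex.normSq_eq_conj_mul_self]
      ring
    rw [sum_congr rfl hterm, M]
    rw [hz, hz]
    push_cast
    ring
  have hF : ∀ l ∈ range (m + 1 + 1),
      (l : ℝ) * ‖Famp k0 k1 l (m + 1 - l) α‖ ^ 2
        = ((l:ℝ) * ((Nat.factorial l * Nat.factorial (m + 1 - l) : ℕ) : ℝ) *
            Complex.normSq (w a b c d k0 k1 l)) /
            ((Nat.factorial k0 * Nat.factorial k1 : ℕ) : ℝ) := by
    intro l hl
    rw [mem_range] at hl
    rw [Famp_eq α (m+1) k0 k1 l hk (by omega)]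
    rw [norm_mul, Complex.norm_real, Real.norm_eq_abs, mul_pow, Complex.sq_norm]
    have hfacpos : (0:ℝ) < ((Nat.factorial k0 * Nat.factorial k1 : ℕ) : ℝ) := by positivity
    rw [abs_of_nonneg (by positivity)]
    rw [div_pow, Real.sq_sqrt (by positivity)]
    rw [show ((Nat.factorial k0 * Nat.factorial k1 * Nat.factorial l *
        Nat.factorial (m + 1 - l) : ℕ) : ℝ)
      = ((Nat.factorial k0 * Nat.factorial k1 : ℕ) : ℝ) *
        ((Nat.factorial l * Nat.factorial (m + 1 - l) : ℕ) : ℝ) by push_cast; ring]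
    field_simp
    ring
  rw [sum_congr rfl hF, ← sum_div, keyR]
  rcases Nat.eq_zero_or_pos k0 with rfl | hk0pos
  · obtain rfl : k1 = m + 1 := by omega
    simp only [Nat.cast_zero, Nat.factorial_zero, Nat.succ_sub_one, pow_zero, Nat.cast_ofNat,
      Nat.zero_sub, Nat.factorial_succ]
    push_cast
    field_simp
    ring
  rcases Nat.eq_zero_or_pos k1 with rfl | hk1pos
  · obtain rfl : k0 = m + 1 := by omega
    simp only [Nat.cast_zero, Nat.factorial_zero, Nat.succ_sub_one, pow_zero, Nat.zero_sub,
      Nat.factorial_succ]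
    push_cast
    field_simp
    ring
  obtain ⟨K, rfl⟩ : ∃ K, k0 = K + 1 := ⟨k0 - 1, by omega⟩
  obtain ⟨L, rfl⟩ : ∃ L, k1 = L + 1 := ⟨k1 - 1, by omega⟩
  simp only [Nat.succ_sub_one]
  rw [Nat.factorial_succ K, Nat.factorial_succ L]
  push_cast
  field_simp
  ring
end

section
/- Let U be a 2x2 unitary complex matrix with entries u_{ab} and let k0, k1 be nonnegative integers with k0 + k1 = n ≥ 1. Define F(l0, l1) as the multimode interference amplitude (sum over 2x2 arrays with row sums (k0,k1) and column sums (l0,l1) of the square-root multinomial weights times monomials in u_{ab}). Then (1/n) Σ_{l0+l1=n} l0 * |F(l0,l1)|^2 = (k0/n) |u_{00}|^2 + (k1/n) |u_{10}|^2. That is, the probability of announcing output arm 0 under the proportional classical postprocessing of a full photon-number-resolving measurement equals the probability that a single photon, chosen uniformly from the n input photons, exits in arm 0. -/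
open Finset

open MvPolynomial

noncomputable section UniversalSquashAux

local notation "conj'" => starRingEnd ℂ

def wfac (d : Fin 2 →₀ ℕ) : ℕ := (d 0).factorial * (d 1).factorial

def Bform (P Q : MvPolynomial (Fin 2) ℂ) : ℂ :=
  ∑ d ∈ P.support, P.coeff d * conj' (Q.coeff d) * (wfac d : ℂ)

lemma Bform_eq_sum {P Q : MvPolynomial (Fin 2) ℂ} {S : Finset (Fin 2 →₀ ℕ)}
    (h : P.support ⊆ S) :
    Bform P Q = ∑ d ∈ S, P.coeff d * conj' (Q.coeff d) * (wfac d : ℂ) :=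
  Finset.sum_subset h (fun d _ hd => by
    rw [MvPolynomial.notMem_support_iff] at hd; simp [hd])

lemma Bform_add_left (P1 P2 Q : MvPolynomial (Fin 2) ℂ) :
    Bform (P1 + P2) Q = Bform P1 Q + Bform P2 Q := by
  rw [Bform_eq_sum (S := P1.support ∪ P2.support) (MvPolynomial.support_add),
    Bform_eq_sum (S := P1.support ∪ P2.support) Finset.subset_union_left,
    Bform_eq_sum (S := P1.support ∪ P2.support) Finset.subset_union_right,
    ← Finset.sum_add_distrib]
  exact Finset.sum_congr rfl fun d _ => by rw [coeff_add]; ring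

lemma Bform_C_mul_left (c : ℂ) (P Q : MvPolynomial (Fin 2) ℂ) :
    Bform (C c * P) Q = c * Bform P Q := by
  have hsub : (C c * P).support ⊆ P.support := by
    intro d hd
    rw [mem_support_iff, coeff_C_mul] at hd
    rw [mem_support_iff]
    exact fun h => hd (by rw [h, mul_zero])
  rw [Bform_eq_sum (S := P.support) hsub, Bform, Finset.mul_sum]
  exact Finset.sum_congr rfl fun d _ => by rw [coeff_C_mul]; ring

lemma Bform_add_right (P Q1 Q2 : MvPolynomial (Fin 2) ℂ) :
    Bform P (Q1 + Q2) = Bform P Q1 + Bform P Q2 := by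
  rw [Bform, Bform, Bform, ← Finset.sum_add_distrib]
  exact Finset.sum_congr rfl fun d _ => by rw [coeff_add, map_add]; ring

lemma Bform_C_mul_right (c : ℂ) (P Q : MvPolynomial (Fin 2) ℂ) :
    Bform P (C c * Q) = conj' c * Bform P Q := by
  rw [Bform, Bform, Finset.mul_sum]
  exact Finset.sum_congr rfl fun d _ => by rw [coeff_C_mul, map_mul]; ring

lemma Bform_one_one : Bform 1 1 = 1 := by
  rw [Bform_eq_sum (S := {0}) (by
    intro d hd
    rw [mem_support_iff] at hd
    simp only [Finset.mem_singleton]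
    by_contra h
    exact hd (by rw [← C_1, coeff_C, if_neg (Ne.symm h)]))]
  simp [wfac]

lemma coeff_pderiv (i : Fin 2) (d : Fin 2 →₀ ℕ) (Q : MvPolynomial (Fin 2) ℂ) :
    (pderiv i Q).coeff d = (d i + 1 : ℕ) * Q.coeff (d + Finsupp.single i 1) := by
  induction Q using MvPolynomial.induction_on' with
  | monomial e a =>
    rw [pderiv_monomial, coeff_monomial, coeff_monomial]
    rcases Nat.eq_zero_or_pos (e i) with h0 | hpos
    · have he : e - Finsupp.single i 1 = e := by
        ext j
        rcases eq_or_ne j i with rfl | hj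
        · simp [h0]
        · simp [Finsupp.single_apply, Ne.symm hj]
      rw [he, h0]
      have : e ≠ d + Finsupp.single i 1 := by
        intro h
        have := congrArg (fun f => f i) h
        simp [h0] at this
      rw [if_neg this]
      split <;> simp
    · have hiff : (e - Finsupp.single i 1 = d) ↔ (e = d + Finsupp.single i 1) := by
        constructor
        · intro h
          ext j
          have hh := congrArg (fun f => f j) h
          simp only [Finsupp.tsub_apply, Finsupp.add_apply, Finsupp.single_apply] at hh ⊢
          rcases eq_or_ne i j with rfl | hj
          · simp at hh ⊢
            omega
          · simp [if_neg hj] at hh ⊢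
            omega
        · intro h
          ext j
          rcases eq_or_ne j i with rfl | hj
          · subst h; simp
          · subst h; simp [Finsupp.single_apply, Ne.symm hj, Finsupp.tsub_apply]
      by_cases h : e = d + Finsupp.single i 1
      · rw [if_pos (hiff.mpr h), if_pos h]
        have : e i = d i + 1 := by subst h; simp
        rw [this]; push_cast; ring
      · rw [if_neg (fun hh => h (hiff.mp hh)), if_neg h, mul_zero]
  | add p q hp hq => rw [map_add, coeff_add, coeff_add, hp, hq, mul_add]

lemma wfac_succ (i : Fin 2) (d : Fin 2 →₀ ℕ) :
    wfac (Finsupp.single i 1 + d) = (d i + 1) * wfac d := by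
  fin_cases i <;>
  · simp only [wfac, Finsupp.add_apply, Finsupp.single_apply]
    simp [Nat.factorial_succ, Nat.add_comm 1]
    ring

lemma Bform_X_mul (i : Fin 2) (P Q : MvPolynomial (Fin 2) ℂ) :
    Bform (X i * P) Q = Bform P (pderiv i Q) := by
  rw [Bform, support_X_mul, Finset.sum_map, Bform]
  refine Finset.sum_congr rfl fun d _ => ?_
  simp only [addLeftEmbedding_apply]
  rw [coeff_X_mul, coeff_pderiv, wfac_succ, map_mul, add_comm d (Finsupp.single i 1),
    map_natCast]
  push_cast
  ring

section Key
variable (u00 u01 u10 u11 : ℂ)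

def PA : MvPolynomial (Fin 2) ℂ := C u00 * X 0 + C u01 * X 1
def PB : MvPolynomial (Fin 2) ℂ := C u10 * X 0 + C u11 * X 1

lemma pderiv_PA (i : Fin 2) : pderiv i (PA u00 u01) = C (if i = 0 then u00 else u01) := by
  fin_cases i <;> simp [PA]

lemma pderiv_PB (i : Fin 2) : pderiv i (PB u10 u11) = C (if i = 0 then u10 else u11) := by
  fin_cases i <;> simp [PB]

lemma pdAB (i : Fin 2) (r s : ℕ) :
    pderiv i (PA u00 u01 ^ r * PB u10 u11 ^ s)
      = C ((r : ℂ) * (if i = 0 then u00 else u01)) * (PA u00 u01 ^ (r-1) * PB u10 u11 ^ s)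
        + C ((s : ℂ) * (if i = 0 then u10 else u11)) * (PA u00 u01 ^ r * PB u10 u11 ^ (s-1)) := by
  rw [pderiv_mul, pderiv_pow, pderiv_pow, pderiv_PA, pderiv_PB, C_mul, C_mul,
    ← C_eq_coe_nat, ← C_eq_coe_nat]
  ring

variable (hrA : u00 * conj' u00 + u01 * conj' u01 = 1)
  (hrB : u10 * conj' u10 + u11 * conj' u11 = 1)
  (hAB : u00 * conj' u10 + u01 * conj' u11 = 0)
  (hBA : u10 * conj' u00 + u11 * conj' u01 = 0)

include hrA hAB in
lemma BA (T : MvPolynomial (Fin 2) ℂ) (r s : ℕ) :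
    Bform (PA u00 u01 * T) (PA u00 u01 ^ r * PB u10 u11 ^ s)
      = r * Bform T (PA u00 u01 ^ (r-1) * PB u10 u11 ^ s) := by
  have h1 : PA u00 u01 * T = C u00 * (X 0 * T) + C u01 * (X 1 * T) := by rw [PA]; ring
  rw [h1, Bform_add_left, Bform_C_mul_left, Bform_C_mul_left, Bform_X_mul, Bform_X_mul,
    pdAB, pdAB, Bform_add_right, Bform_add_right, Bform_C_mul_right, Bform_C_mul_right,
    Bform_C_mul_right, Bform_C_mul_right]
  simp only [if_pos rfl, if_neg (by decide : (1 : Fin 2) ≠ 0), if_true, map_mul, map_natCast]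
  linear_combination ((r : ℂ) * Bform T (PA u00 u01 ^ (r-1) * PB u10 u11 ^ s)) * hrA
    + ((s : ℂ) * Bform T (PA u00 u01 ^ r * PB u10 u11 ^ (s-1))) * hAB

include hrB hBA in
lemma BB (T : MvPolynomial (Fin 2) ℂ) (r s : ℕ) :
    Bform (PB u10 u11 * T) (PA u00 u01 ^ r * PB u10 u11 ^ s)
      = s * Bform T (PA u00 u01 ^ r * PB u10 u11 ^ (s-1)) := by
  have h1 : PB u10 u11 * T = C u10 * (X 0 * T) + C u11 * (X 1 * T) := by rw [PB]; ring
  rw [h1, Bform_add_left, Bform_C_mul_left, Bform_C_mul_left, Bform_X_mul, Bform_X_mul,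
    pdAB, pdAB, Bform_add_right, Bform_add_right, Bform_C_mul_right, Bform_C_mul_right,
    Bform_C_mul_right, Bform_C_mul_right]
  simp only [if_pos rfl, if_neg (by decide : (1 : Fin 2) ≠ 0), if_true, map_mul, map_natCast]
  linear_combination ((s : ℂ) * Bform T (PA u00 u01 ^ r * PB u10 u11 ^ (s-1))) * hrB
    + ((r : ℂ) * Bform T (PA u00 u01 ^ (r-1) * PB u10 u11 ^ s)) * hBA

include hrA hrB hAB hBA in
lemma keyLemma : ∀ N p q r s : ℕ, p + q = N → p + q = r + s →
    Bform (PA u00 u01 ^ p * PB u10 u11 ^ q) (PA u00 u01 ^ r * PB u10 u11 ^ s)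
      = if p = r then ((p.factorial * q.factorial : ℕ) : ℂ) else 0 := by
  intro N
  induction N with
  | zero =>
    intro p q r s hN hrs
    obtain ⟨rfl, rfl⟩ : p = 0 ∧ q = 0 := by omega
    obtain ⟨rfl, rfl⟩ : r = 0 ∧ s = 0 := by omega
    simpa using Bform_one_one
  | succ N ih =>
    intro p q r s hN hrs
    rcases p with _ | p'
    · rcases q with _ | q'
      · omega
      · have hq : PA u00 u01 ^ 0 * PB u10 u11 ^ (q' + 1)
            = PB u10 u11 * (PA u00 u01 ^ 0 * PB u10 u11 ^ q') := by ring
        rw [hq, BB u00 u01 u10 u11 hrB hBA]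
        rcases s with _ | s'
        · rw [if_neg (by omega)]
          have : PA u00 u01 ^ r * PB u10 u11 ^ 0 = PA u00 u01 ^ r * PB u10 u11 ^ (0-1) := rfl
          simp
        · rw [Nat.add_sub_cancel, ih 0 q' r s' (by omega) (by omega)]
          rcases eq_or_ne (0 : ℕ) r with rfl | hne
          · rw [if_pos rfl, if_pos rfl]
            have : s' = q' := by omega
            subst this
            push_cast [Nat.factorial_succ]
            ring
          · rw [if_neg hne, if_neg hne, mul_zero]
    · have hp : PA u00 u01 ^ (p' + 1) * PB u10 u11 ^ q
          = PA u00 u01 * (PA u00 u01 ^ p' * PB u10 u11 ^ q) := by ring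
      rw [hp, BA u00 u01 u10 u11 hrA hAB]
      rcases r with _ | r'
      · rw [if_neg (by omega)]
        simp
      · rw [Nat.add_sub_cancel, ih p' q r' s (by omega) (by omega)]
        rcases eq_or_ne p' r' with rfl | hne
        · rw [if_pos rfl, if_pos rfl]
          push_cast [Nat.factorial_succ]
          ring
        · rw [if_neg hne, if_neg (by omega), mul_zero]

end Key

section Coeff2
variable (u00 u01 u10 u11 : ℂ)

def csum (k0 k1 l0 l1 : ℕ) : ℂ :=
  ∑ m ∈ squares k0 k1 l0 l1,
    ((Nat.choose k0 m.1 * Nat.choose k1 m.2.2.1 : ℕ) : ℂ) *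
      u00 ^ m.1 * u01 ^ m.2.1 * u10 ^ m.2.2.1 * u11 ^ m.2.2.2

lemma finsupp_pair_eq (a b c d : ℕ) :
    (Finsupp.single (0 : Fin 2) a + Finsupp.single 1 b) = Finsupp.single 0 c + Finsupp.single 1 d
      ↔ a = c ∧ b = d := by
  constructor
  · intro h
    have h0 := congrArg (fun f => f 0) h
    have h1 := congrArg (fun f => f 1) h
    simp [Finsupp.single_apply] at h0 h1
    exact ⟨h0, h1⟩
  · rintro ⟨rfl, rfl⟩; rfl

lemma pow_linear_eq (a b : ℂ) (k : ℕ) :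
    (C a * X 0 + C b * X 1 : MvPolynomial (Fin 2) ℂ) ^ k
      = ∑ m ∈ Finset.range (k + 1),
          monomial (Finsupp.single 0 m + Finsupp.single 1 (k - m))
            ((k.choose m : ℂ) * a ^ m * b ^ (k - m)) := by
  rw [add_pow]
  refine Finset.sum_congr rfl fun m hm => ?_
  rw [mul_pow, mul_pow, ← C_pow, ← C_pow, X_pow_eq_monomial, X_pow_eq_monomial,
    C_mul_monomial, C_mul_monomial, monomial_mul, ← C_eq_coe_nat, mul_comm, C_mul_monomial]
  ring_nf

lemma coeffP (k0 k1 l0 l1 : ℕ) :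
    (PA u00 u01 ^ k0 * PB u10 u11 ^ k1).coeff (Finsupp.single 0 l0 + Finsupp.single 1 l1)
      = ∑ i ∈ Finset.range (k0 + 1), ∑ j ∈ Finset.range (k1 + 1),
          if i + j = l0 ∧ (k0 - i) + (k1 - j) = l1 then
            ((k0.choose i * k1.choose j : ℕ) : ℂ) * u00 ^ i * u01 ^ (k0 - i)
              * u10 ^ j * u11 ^ (k1 - j)
          else 0 := by
  rw [PA, PB, pow_linear_eq, pow_linear_eq, Finset.sum_mul_sum]
  rw [MvPolynomial.coeff_sum]
  refine Finset.sum_congr rfl fun i hi => ?_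
  rw [MvPolynomial.coeff_sum]
  refine Finset.sum_congr rfl fun j hj => ?_
  rw [monomial_mul, coeff_monomial]
  have hadd : (Finsupp.single (0:Fin 2) i + Finsupp.single 1 (k0 - i))
      + (Finsupp.single 0 j + Finsupp.single 1 (k1 - j))
      = Finsupp.single 0 (i + j) + Finsupp.single 1 ((k0 - i) + (k1 - j)) := by
    rw [Finsupp.single_add, Finsupp.single_add]; abel
  rw [hadd]
  by_cases h : i + j = l0 ∧ (k0 - i) + (k1 - j) = l1
  · rw [if_pos ((finsupp_pair_eq _ _ _ _).mpr h), if_pos h]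
    push_cast; ring
  · rw [if_neg (fun hh => h ((finsupp_pair_eq _ _ _ _).mp hh)), if_neg h]

lemma csum_eq_coeff (k0 k1 l0 l1 : ℕ) :
    csum u00 u01 u10 u11 k0 k1 l0 l1
      = (PA u00 u01 ^ k0 * PB u10 u11 ^ k1).coeff
          (Finsupp.single 0 l0 + Finsupp.single 1 l1) := by
  rw [coeffP, ← Finset.sum_product', csum]
  rw [← Finset.sum_filter]
  refine Finset.sum_nbij' (fun m => (m.1, m.2.2.1)) (fun p => (p.1, k0 - p.1, p.2, k1 - p.2))
    ?_ ?_ ?_ ?_ ?_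
  · intro m hm
    simp only [squares, Finset.mem_filter, Finset.mem_product, Finset.mem_range] at hm ⊢
    omega
  · intro p hp
    simp only [squares, Finset.mem_filter, Finset.mem_product, Finset.mem_range] at hp ⊢
    omega
  · intro m hm
    simp only [squares, Finset.mem_filter, Finset.mem_product, Finset.mem_range] at hm
    obtain ⟨-, h1, h2, -, -⟩ := hm
    ext <;> simp <;> omega
  · intro p hp
    rfl
  · intro m hm
    simp only [squares, Finset.mem_filter, Finset.mem_product, Finset.mem_range] at hm
    obtain ⟨-, h1, h2, -, -⟩ := hm
    have e1 : k0 - m.1 = m.2.1 := by omega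
    have e2 : k1 - m.2.2.1 = m.2.2.2 := by omega
    simp [e1, e2]

end Coeff2

section Main
variable (u00 u01 u10 u11 : ℂ)
variable (hrA : u00 * conj' u00 + u01 * conj' u01 = 1)
  (hrB : u10 * conj' u10 + u11 * conj' u11 = 1)
  (hAB : u00 * conj' u10 + u01 * conj' u11 = 0)
  (hBA : u10 * conj' u00 + u11 * conj' u01 = 0)

lemma degree_two (d : Fin 2 →₀ ℕ) : d.degree = d 0 + d 1 := by
  rw [Finsupp.degree_apply,
    Finset.sum_subset (Finset.subset_univ d.support)
      (fun i _ hi => Finsupp.notMem_support_iff.mp hi)]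
  exact Fin.sum_univ_two _

lemma hom_P (k0 k1 : ℕ) :
    (PA u00 u01 ^ k0 * PB u10 u11 ^ k1).IsHomogeneous (k0 + k1) := by
  have hA : (PA u00 u01).IsHomogeneous 1 :=
    (isHomogeneous_C_mul_X _ _).add (isHomogeneous_C_mul_X _ _)
  have hB : (PB u10 u11).IsHomogeneous 1 :=
    (isHomogeneous_C_mul_X _ _).add (isHomogeneous_C_mul_X _ _)
  simpa using (hA.pow k0).mul (hB.pow k1)

lemma supp_hom {P : MvPolynomial (Fin 2) ℂ} {n : ℕ} (h : P.IsHomogeneous n) :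
    P.support ⊆ (Finset.range (n+1)).image
      (fun l0 => Finsupp.single (0 : Fin 2) l0 + Finsupp.single 1 (n - l0)) := by
  intro d hd
  have hdeg : d 0 + d 1 = n := by
    by_contra hne
    exact (mem_support_iff.mp hd) (h.coeff_eq_zero (by rw [degree_two]; exact hne))
  rw [Finset.mem_image]
  refine ⟨d 0, Finset.mem_range.mpr (by omega), ?_⟩
  ext j
  fin_cases j <;> simp [Finsupp.single_apply] <;> omega

include hrA hrB hAB hBA in
lemma main_complex (n k0 k1 : ℕ) (hk : k0 + k1 = n) :
    ∑ l0 ∈ Finset.range (n+1), (l0 : ℂ) * ((l0.factorial * (n-l0).factorial : ℕ) : ℂ) *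
      (csum u00 u01 u10 u11 k0 k1 l0 (n-l0) * conj' (csum u00 u01 u10 u11 k0 k1 l0 (n-l0)))
    = ((k0.factorial * k1.factorial : ℕ) : ℂ) *
        ((k0:ℂ) * (u00 * conj' u00) + (k1:ℂ) * (u10 * conj' u10)) := by
  set A := PA u00 u01
  set B := PB u10 u11
  set P := A ^ k0 * B ^ k1 with hPdef
  have hhom : P.IsHomogeneous n := hk ▸ hom_P u00 u01 u10 u11 k0 k1
  set e : ℕ → (Fin 2 →₀ ℕ) :=
    fun l0 => Finsupp.single (0 : Fin 2) l0 + Finsupp.single 1 (n - l0) with he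
  have he0 : ∀ l0, e l0 0 = l0 := by
    intro l0; simp [he, Finsupp.single_apply]
  have he1 : ∀ l0, e l0 1 = n - l0 := by
    intro l0; simp [he, Finsupp.single_apply]
  have hsuppP : P.support ⊆ (Finset.range (n+1)).image e := supp_hom hhom
  set Q := X 0 * pderiv 0 P with hQ
  -- Step A : Bform Q P equals the LHS sum
  have hstepA : Bform Q P
      = ∑ l0 ∈ Finset.range (n+1), (l0 : ℂ) * ((l0.factorial * (n-l0).factorial : ℕ) : ℂ) *
        (csum u00 u01 u10 u11 k0 k1 l0 (n-l0) * conj' (csum u00 u01 u10 u11 k0 k1 l0 (n-l0))) := by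
    rw [Bform_eq_sum (S := Q.support ∪ (Finset.range (n+1)).image e) Finset.subset_union_left]
    rw [← Finset.sum_subset (Finset.subset_union_right)
      (fun d _ hd => by
        have : P.coeff d = 0 := notMem_support_iff.mp (fun hds => hd (hsuppP hds))
        rw [this, map_zero, mul_zero, zero_mul])]
    rw [Finset.sum_image (fun a _ b _ hab => by
      have := congrArg (fun f => f 0) hab
      simpa [he0] using this)]
    refine Finset.sum_congr rfl fun l0 hl0 => ?_
    have hcsum : P.coeff (e l0) = csum u00 u01 u10 u11 k0 k1 l0 (n-l0) :=
      (csum_eq_coeff u00 u01 u10 u11 k0 k1 l0 (n-l0)).symm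
    have hw : (wfac (e l0) : ℂ) = ((l0.factorial * (n-l0).factorial : ℕ) : ℂ) := by
      rw [wfac, he0, he1]
    have hQc : Q.coeff (e l0) = (l0 : ℂ) * P.coeff (e l0) := by
      rcases l0 with _ | m
      · have : (0 : Fin 2) ∉ (e 0).support := by
          rw [Finsupp.notMem_support_iff]; exact he0 0
        rw [hQ, coeff_X_mul' , if_neg this]
        simp
      · have hsplit : e (m + 1) = Finsupp.single (0 : Fin 2) 1
            + (Finsupp.single (0 : Fin 2) m + Finsupp.single 1 (n - (m+1))) := by
          ext j
          fin_cases j <;> simp [he, Finsupp.single_apply] <;> omega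
        rw [hQ, hsplit, coeff_X_mul, _root_.coeff_pderiv]
        have hidx : (Finsupp.single (0 : Fin 2) m + Finsupp.single 1 (n - (m+1)))
            + Finsupp.single 0 1 = e (m+1) := by
          ext j
          fin_cases j <;> simp [he, Finsupp.single_apply]
        rw [hidx]
        have hm : ((Finsupp.single (0 : Fin 2) m + Finsupp.single 1 (n - (m+1))) : Fin 2 →₀ ℕ) (0 : Fin 2) = m := by
          simp [Finsupp.single_apply]
        rw [hm, ← hsplit]
    rw [hQc, hcsum, hw]
    ring
  -- Step C : compute Bform Q P via the key lemma
  have hstepC : Bform Q P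
      = ((k0.factorial * k1.factorial : ℕ) : ℂ) *
        ((k0:ℂ) * (u00 * conj' u00) + (k1:ℂ) * (u10 * conj' u10)) := by
    rw [hQ, Bform_X_mul]
    have hpd : pderiv 0 P = C ((k0 : ℂ) * u00) * (A ^ (k0-1) * B ^ k1)
        + C ((k1 : ℂ) * u10) * (A ^ k0 * B ^ (k1-1)) := by
      have h := pdAB u00 u01 u10 u11 0 k0 k1
      simp only [if_pos rfl] at h
      exact h
    rw [hpd]
    rw [Bform_add_left, Bform_C_mul_left, Bform_C_mul_left, Bform_add_right, Bform_add_right,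
      Bform_C_mul_right, Bform_C_mul_right, Bform_C_mul_right, Bform_C_mul_right]
    rcases k0 with _ | p <;> rcases k1 with _ | q
    · simp
    · simp only [Nat.cast_zero, zero_mul, map_zero, mul_zero, zero_mul, zero_add, add_zero,
        Nat.add_sub_cancel]
      rw [keyLemma u00 u01 u10 u11 hrA hrB hAB hBA q 0 q 0 q (by omega) (by omega), if_pos rfl]
      rw [map_mul, map_natCast]
      push_cast [Nat.factorial_succ]
      ring
    · simp only [Nat.cast_zero, zero_mul, map_zero, mul_zero, zero_mul, zero_add, add_zero,
        Nat.add_sub_cancel]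
      rw [keyLemma u00 u01 u10 u11 hrA hrB hAB hBA p p 0 p 0 (by omega) (by omega), if_pos rfl]
      rw [map_mul, map_natCast]
      push_cast [Nat.factorial_succ]
      ring
    · simp only [Nat.add_sub_cancel]
      rw [keyLemma u00 u01 u10 u11 hrA hrB hAB hBA (p + q + 1) p (q+1) p (q+1) (by omega) (by omega),
        keyLemma u00 u01 u10 u11 hrA hrB hAB hBA (p + q + 1) p (q+1) (p+1) q (by omega) (by omega),
        keyLemma u00 u01 u10 u11 hrA hrB hAB hBA (p + q + 1) (p+1) q p (q+1) (by omega) (by omega),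
        keyLemma u00 u01 u10 u11 hrA hrB hAB hBA (p + q + 1) (p+1) q (p+1) q (by omega) (by omega),
        if_pos rfl, if_pos rfl, if_neg (by omega), if_neg (by omega)]
      simp only [map_mul, map_natCast, mul_zero, add_zero, zero_add]
      push_cast [Nat.factorial_succ]
      ring
  rw [← hstepA, hstepC]

end Main

lemma fac_key (a b : ℕ) : (a + b).factorial = (a + b).choose a * (a.factorial * b.factorial) := by
  have h := Nat.choose_mul_factorial_mul_factorial (Nat.le_add_right a b)
  rw [Nat.add_sub_cancel_left] at h
  rw [← h]; ring

lemma nat_id {k0 k1 l0 l1 m00 m01 m10 m11 : ℕ}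
    (h1 : m00 + m01 = k0) (h2 : m10 + m11 = k1) (h3 : m00 + m10 = l0) (h4 : m01 + m11 = l1) :
    (k0.choose m00 * k1.choose m10 * l0.choose m00 * l1.choose m01)
        * (k0.factorial * k1.factorial)
      = (k0.choose m00 * k1.choose m10)^2 * (l0.factorial * l1.factorial) := by
  subst h1 h2 h3 h4
  rw [fac_key m00 m01, fac_key m10 m11, fac_key m00 m10, fac_key m01 m11]
  ring

lemma sqrt_id {k0 k1 l0 l1 m00 m01 m10 m11 : ℕ}
    (h1 : m00 + m01 = k0) (h2 : m10 + m11 = k1) (h3 : m00 + m10 = l0) (h4 : m01 + m11 = l1) :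
    Real.sqrt ((k0.choose m00 * k1.choose m10 * l0.choose m00 * l1.choose m01 : ℕ) : ℝ)
      = (k0.choose m00 * k1.choose m10 : ℕ) *
          Real.sqrt ((l0.factorial * l1.factorial : ℕ) : ℝ)
          / Real.sqrt ((k0.factorial * k1.factorial : ℕ) : ℝ) := by
  have hK : (0:ℝ) < Real.sqrt ((k0.factorial * k1.factorial : ℕ) : ℝ) :=
    Real.sqrt_pos.mpr (by
      exact_mod_cast Nat.cast_pos.mpr (Nat.mul_pos (Nat.factorial_pos _) (Nat.factorial_pos _)))
  rw [eq_div_iff hK.ne']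
  calc Real.sqrt ((k0.choose m00 * k1.choose m10 * l0.choose m00 * l1.choose m01 : ℕ) : ℝ)
        * Real.sqrt ((k0.factorial * k1.factorial : ℕ) : ℝ)
      = Real.sqrt (((k0.choose m00 * k1.choose m10 * l0.choose m00 * l1.choose m01 : ℕ) : ℝ)
          * ((k0.factorial * k1.factorial : ℕ) : ℝ)) := (Real.sqrt_mul (by positivity) _).symm
    _ = Real.sqrt (((k0.choose m00 * k1.choose m10 : ℕ) : ℝ)^2
          * ((l0.factorial * l1.factorial : ℕ) : ℝ)) := by
        rw [← Nat.cast_mul, nat_id h1 h2 h3 h4]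
        push_cast
        ring_nf
    _ = ((k0.choose m00 * k1.choose m10 : ℕ) : ℝ)
          * Real.sqrt ((l0.factorial * l1.factorial : ℕ) : ℝ) := by
        rw [Real.sqrt_mul (by positivity), Real.sqrt_sq (by positivity)]

lemma Famp_eq_s5 (k0 k1 l0 l1 : ℕ) (α : Fin 2 → Fin 2 → ℂ) :
    Famp k0 k1 l0 l1 α
      = ((Real.sqrt ((l0.factorial * l1.factorial : ℕ) : ℝ)
          / Real.sqrt ((k0.factorial * k1.factorial : ℕ) : ℝ) : ℝ) : ℂ)
        * csum (α 0 0) (α 0 1) (α 1 0) (α 1 1) k0 k1 l0 l1 := by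
  rw [Famp, csum, Finset.mul_sum]
  refine Finset.sum_congr rfl fun m hm => ?_
  simp only [squares, Finset.mem_filter, Finset.mem_product, Finset.mem_range] at hm
  obtain ⟨-, h1, h2, h3, h4⟩ := hm
  rw [sqrt_id h1 h2 h3 h4]
  push_cast
  ring

/-- Multimode universal-squashing equivalence (d = 2): for a 2x2 unitary `U` and
`k0 + k1 = n ≥ 1`,
`(1/n) Σ_{l0+l1=n} l0 |F(l0,l1)|^2 = (k0/n) |u00|^2 + (k1/n) |u10|^2`. -/
theorem stmt_5 (n : ℕ) (hn : 1 ≤ n) (U : Matrix (Fin 2) (Fin 2) ℂ)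
    (hU : U ∈ Matrix.unitaryGroup (Fin 2) ℂ)
    (k0 k1 : ℕ) (hk : k0 + k1 = n) :
    (1 / (n : ℝ)) * ∑ l0 ∈ Finset.range (n + 1),
        (l0 : ℝ) * ‖Famp k0 k1 l0 (n - l0) (fun a b => U a b)‖ ^ 2
      = ((k0 : ℝ) / n) * ‖U 0 0‖ ^ 2
        + ((k1 : ℝ) / n) * ‖U 1 0‖ ^ 2 := by
  have hUU : U * star U = 1 := Matrix.mem_unitaryGroup_iff.mp hU
  have hab : ∀ a b : Fin 2, (U * star U) a b = (1 : Matrix (Fin 2) (Fin 2) ℂ) a b :=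
    fun a b => by rw [hUU]
  have hrA : U 0 0 * conj' (U 0 0) + U 0 1 * conj' (U 0 1) = 1 := by
    simpa [Matrix.mul_apply, Fin.sum_univ_two, Matrix.one_apply, Matrix.star_apply,
      ← starRingEnd_apply] using hab 0 0
  have hrB : U 1 0 * conj' (U 1 0) + U 1 1 * conj' (U 1 1) = 1 := by
    simpa [Matrix.mul_apply, Fin.sum_univ_two, Matrix.one_apply, Matrix.star_apply,
      ← starRingEnd_apply] using hab 1 1
  have hAB : U 0 0 * conj' (U 1 0) + U 0 1 * conj' (U 1 1) = 0 := by
    simpa [Matrix.mul_apply, Fin.sum_univ_two, Matrix.one_apply, Matrix.star_apply,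
      ← starRingEnd_apply] using hab 0 1
  have hBA : U 1 0 * conj' (U 0 0) + U 1 1 * conj' (U 0 1) = 0 := by
    simpa [Matrix.mul_apply, Fin.sum_univ_two, Matrix.one_apply, Matrix.star_apply,
      ← starRingEnd_apply] using hab 1 0
  have hmc := main_complex (U 0 0) (U 0 1) (U 1 0) (U 1 1) hrA hrB hAB hBA n k0 k1 hk
  simp only [Complex.mul_conj] at hmc
  have hreal : ∑ l0 ∈ Finset.range (n+1), (l0 : ℝ) *
        ((l0.factorial * (n-l0).factorial : ℕ) : ℝ) *
        Complex.normSq (csum (U 0 0) (U 0 1) (U 1 0) (U 1 1) k0 k1 l0 (n-l0))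
      = ((k0.factorial * k1.factorial : ℕ) : ℝ) *
        ((k0:ℝ) * Complex.normSq (U 0 0) + (k1:ℝ) * Complex.normSq (U 1 0)) := by
    exact_mod_cast hmc
  have hKpos : (0:ℝ) < ((k0.factorial * k1.factorial : ℕ) : ℝ) := by
    exact_mod_cast Nat.mul_pos (Nat.factorial_pos _) (Nat.factorial_pos _)
  have habs : ∀ l0 : ℕ, ‖Famp k0 k1 l0 (n - l0) (fun a b => U a b)‖ ^ 2
      = ((l0.factorial * (n-l0).factorial : ℕ) : ℝ)
          / ((k0.factorial * k1.factorial : ℕ) : ℝ)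
        * Complex.normSq (csum (U 0 0) (U 0 1) (U 1 0) (U 1 1) k0 k1 l0 (n-l0)) := by
    intro l0
    rw [Famp_eq_s5, norm_mul, Complex.norm_real, Real.norm_eq_abs, mul_pow, Complex.sq_norm,
      abs_of_nonneg (by positivity), div_pow, Real.sq_sqrt (by positivity),
      Real.sq_sqrt (by positivity)]
  have hsum : ∑ l0 ∈ Finset.range (n+1),
        (l0 : ℝ) * ‖Famp k0 k1 l0 (n - l0) (fun a b => U a b)‖ ^ 2
      = (∑ l0 ∈ Finset.range (n+1), (l0 : ℝ) *
          ((l0.factorial * (n-l0).factorial : ℕ) : ℝ) *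
          Complex.normSq (csum (U 0 0) (U 0 1) (U 1 0) (U 1 1) k0 k1 l0 (n-l0)))
        / ((k0.factorial * k1.factorial : ℕ) : ℝ) := by
    rw [Finset.sum_div]
    exact Finset.sum_congr rfl fun l0 _ => by rw [habs l0]; ring
  rw [hsum, hreal, Complex.sq_norm, Complex.sq_norm]
  have hn0 : (n:ℝ) ≠ 0 := Nat.cast_ne_zero.mpr (by omega)
  field_simp

end UniversalSquashAux
end

section
/- If a 2x2 complex matrix A satisfies A A† = diag(λ_0, λ_1), then the (n+1)x(n+1) matrix f(A) (the n-photon symmetric power with square-root multinomial weights) satisfies f(A) f(A)† = diag over k = (k0,k1), k0+k1 = n, with diagonal entries λ_0^{k0} λ_1^{k1}. -/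
open Finset

/-- The `n`-photon symmetric-power matrix `f(A)`, indexed by `k, l : Fin (n+1)`
representing the pairs `(k, n-k)` and `(l, n-l)` of photon numbers summing to `n`. -/
noncomputable def fSym (n : ℕ) (A : Matrix (Fin 2) (Fin 2) ℂ) :
    Matrix (Fin (n + 1)) (Fin (n + 1)) ℂ :=
  Matrix.of fun k l => Famp k.val (n - k.val) l.val (n - l.val) (fun a b => A a b)


section Aux
open MvPolynomial Nat


/-- exponent finsupp (a, b) on Fin 2 -/
noncomputable def mexp (a b : ℕ) : Fin 2 →₀ ℕ := Finsupp.single 0 a + Finsupp.single 1 b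

lemma mexp_apply0 (a b : ℕ) : mexp a b 0 = a := by simp [mexp]
lemma mexp_apply1 (a b : ℕ) : mexp a b 1 = b := by simp [mexp, Finsupp.single_apply]

lemma mexp_inj {a b c d : ℕ} (h : mexp a b = mexp c d) : a = c ∧ b = d := by
  constructor
  · have := congrArg (fun f => f 0) h; simpa [mexp_apply0] using this
  · have := congrArg (fun f => f 1) h; simpa [mexp_apply1] using this

lemma mexp_add (a b c d : ℕ) : mexp a b + mexp c d = mexp (a+c) (b+d) := by
  ext i; fin_cases i <;> simp [mexp, Finsupp.single_apply]

lemma finsupp_fin2_eq (d : Fin 2 →₀ ℕ) : d = mexp (d 0) (d 1) := by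
  ext i; fin_cases i <;> simp [mexp, Finsupp.single_apply]

lemma degree_fin2 (d : Fin 2 →₀ ℕ) : Finsupp.degree d = d 0 + d 1 := by
  rw [Finsupp.degree_apply, Finset.sum_subset (Finset.subset_univ _)
    (by intro x _ hx; simpa [Finsupp.mem_support_iff] using hx)]
  rw [Fin.sum_univ_two]

lemma degree_mexp (a b : ℕ) : Finsupp.degree (mexp a b) = a + b := by
  rw [Finsupp.degree_apply, Finset.sum_subset (Finset.subset_univ _)
    (by intro x _ hx; simpa [Finsupp.mem_support_iff] using hx)]
  rw [Fin.sum_univ_two, mexp_apply0, mexp_apply1]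

noncomputable def phi (A : Matrix (Fin 2) (Fin 2) ℂ) :
    MvPolynomial (Fin 2) ℂ →ₐ[ℂ] MvPolynomial (Fin 2) ℂ :=
  aeval (fun i => ∑ j, C (A i j) * X j)

lemma phi_X (A : Matrix (Fin 2) (Fin 2) ℂ) (i : Fin 2) :
    phi A (X i) = C (A i 0) * X 0 + C (A i 1) * X 1 := by
  simp [phi, Fin.sum_univ_two]

lemma phi_comp (A B : Matrix (Fin 2) (Fin 2) ℂ) :
    (phi B).comp (phi A) = phi (A * B) := by
  rw [phi, phi, comp_aeval]
  congr 1
  funext i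
  simp only [map_sum, map_mul, aeval_C, aeval_X, algebraMap_eq, Finset.mul_sum]
  rw [Finset.sum_comm]
  congr 1; funext j
  rw [Matrix.mul_apply, map_sum, Finset.sum_mul]
  congr 1; funext k
  rw [C_mul]; ring

lemma phi_homog (A : Matrix (Fin 2) (Fin 2) ℂ) (k0 k1 : ℕ) :
    (phi A (X 0 ^ k0 * X 1 ^ k1)).IsHomogeneous (k0 + k1) := by
  rw [map_mul, map_pow, map_pow]
  have h : ∀ i : Fin 2, (phi A (X i)).IsHomogeneous 1 := by
    intro i
    rw [phi_X]
    exact (isHomogeneous_C_mul_X _ _).add (isHomogeneous_C_mul_X _ _)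
  have := ((h 0).pow k0).mul ((h 1).pow k1)
  simpa using this

lemma homog_decomp {p : MvPolynomial (Fin 2) ℂ} {n : ℕ} (hp : p.IsHomogeneous n) :
    p = ∑ l ∈ Finset.range (n+1), monomial (mexp l (n-l)) (coeff (mexp l (n-l)) p) := by
  apply MvPolynomial.ext
  intro d
  rw [coeff_sum]
  simp only [coeff_monomial]
  by_cases hd : Finsupp.degree d = n
  · have hd2 : d 0 + d 1 = n := by rw [← hd, degree_fin2]
    have hdm : d = mexp (d 0) (n - d 0) := by
      ext i; fin_cases i
      · simpa using (mexp_apply0 (d 0) (n - d 0)).symm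
      · show d 1 = mexp (d 0) (n - d 0) 1
        rw [mexp_apply1]; omega
    rw [Finset.sum_eq_single (d 0)]
    · rw [if_pos hdm.symm, ← hdm]
    · intro l _ hl
      rw [if_neg]
      intro h
      exact hl (mexp_inj (h.trans hdm)).1
    · intro h
      exact absurd (Finset.mem_range.2 (by omega)) h
  · have h0 : coeff d p = 0 := hp.coeff_eq_zero hd
    rw [h0]
    refine (Finset.sum_eq_zero ?_).symm
    intro l hl
    rw [if_neg]
    intro h
    apply hd
    rw [← h, degree_mexp]
    have := Finset.mem_range.1 hl
    omega

lemma monomial_mexp (a b : ℕ) (c : ℂ) :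
    (monomial (mexp a b) c : MvPolynomial (Fin 2) ℂ) = C c * X 0 ^ a * X 1 ^ b := by
  rw [X_pow_eq_monomial, X_pow_eq_monomial, C_apply, monomial_mul, monomial_mul]
  simp [mexp]

lemma lin_pow (a b : ℂ) (k : ℕ) :
    (C a * X 0 + C b * X 1 : MvPolynomial (Fin 2) ℂ)^k
      = ∑ m ∈ Finset.range (k+1), monomial (mexp m (k-m))
          ((k.choose m : ℂ) * a^m * b^(k-m)) := by
  rw [add_pow]
  refine Finset.sum_congr rfl fun m _ => ?_
  rw [monomial_mexp, mul_pow, mul_pow, ← C_pow, ← C_pow, ← C_eq_coe_nat]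
  simp only [C_mul]
  ring

noncomputable def cMat (k0 k1 l0 l1 : ℕ) (A : Matrix (Fin 2) (Fin 2) ℂ) : ℂ :=
  coeff (mexp l0 l1) (phi A (X 0 ^ k0 * X 1 ^ k1))

lemma phi_pow_expand (A : Matrix (Fin 2) (Fin 2) ℂ) (k0 k1 : ℕ) :
    phi A (X 0 ^ k0 * X 1 ^ k1)
      = ∑ m0 ∈ Finset.range (k0+1), ∑ m1 ∈ Finset.range (k1+1),
          monomial (mexp (m0+m1) ((k0-m0)+(k1-m1)))
            ((k0.choose m0 : ℂ) * (k1.choose m1 : ℂ) *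
              A 0 0 ^ m0 * A 0 1 ^ (k0-m0) * A 1 0 ^ m1 * A 1 1 ^ (k1-m1)) := by
  rw [map_mul, map_pow, map_pow, phi_X, phi_X, lin_pow, lin_pow, Finset.sum_mul_sum]
  refine Finset.sum_congr rfl fun m0 _ => Finset.sum_congr rfl fun m1 _ => ?_
  rw [monomial_mul, mexp_add]
  congr 1
  ring

lemma cMat_eq (A : Matrix (Fin 2) (Fin 2) ℂ) (k0 k1 l0 l1 : ℕ) :
    cMat k0 k1 l0 l1 A
      = ∑ m0 ∈ Finset.range (k0+1), ∑ m1 ∈ Finset.range (k1+1),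
          (if m0 + m1 = l0 ∧ (k0-m0)+(k1-m1) = l1 then
            (k0.choose m0 : ℂ) * (k1.choose m1 : ℂ) *
              A 0 0 ^ m0 * A 0 1 ^ (k0-m0) * A 1 0 ^ m1 * A 1 1 ^ (k1-m1)
          else 0) := by
  rw [cMat, phi_pow_expand]
  rw [coeff_sum]
  refine Finset.sum_congr rfl fun m0 _ => ?_
  rw [coeff_sum]
  refine Finset.sum_congr rfl fun m1 _ => ?_
  rw [coeff_monomial]
  by_cases h : m0 + m1 = l0 ∧ (k0-m0)+(k1-m1) = l1
  · rw [if_pos, if_pos h]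
    rw [h.1, h.2]
  · rw [if_neg, if_neg h]
    intro he
    exact h (mexp_inj he)

lemma squares_reindex (k0 k1 l0 l1 : ℕ) (g : ℕ → ℕ → ℕ → ℕ → ℂ) :
    ∑ m ∈ squares k0 k1 l0 l1, g m.1 m.2.1 m.2.2.1 m.2.2.2
      = ∑ p ∈ (Finset.range (k0+1) ×ˢ Finset.range (k1+1)).filter
          (fun p => p.1 + p.2 = l0 ∧ (k0 - p.1) + (k1 - p.2) = l1),
        g p.1 (k0 - p.1) p.2 (k1 - p.2) := by
  refine Finset.sum_nbij' (i := fun m => (m.1, m.2.2.1))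
    (j := fun p => (p.1, k0 - p.1, p.2, k1 - p.2)) ?_ ?_ ?_ ?_ ?_
  · intro m hm
    simp only [squares, Finset.mem_filter, Finset.mem_product, Finset.mem_range] at hm ⊢
    omega
  · intro p hp
    simp only [squares, Finset.mem_filter, Finset.mem_product, Finset.mem_range] at hp ⊢
    omega
  · intro m hm
    simp only [squares, Finset.mem_filter, Finset.mem_product, Finset.mem_range] at hm
    obtain ⟨m1, m2, m3, m4⟩ := m
    simp only at hm ⊢
    have : k0 - m1 = m2 ∧ k1 - m3 = m4 := by omega
    rw [this.1, this.2]
  · intro p hp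
    rfl
  · intro m hm
    simp only [squares, Finset.mem_filter, Finset.mem_product, Finset.mem_range] at hm
    simp only
    congr 1 <;> omega


lemma key_nat_real (a b c d : ℕ) :
    (((a+b)! * (c+d)! : ℕ) : ℝ) *
      (((a+b).choose a * (c+d).choose c * (a+c).choose a * (b+d).choose b : ℕ) : ℝ)
      = ((((a+b).choose a * (c+d).choose c : ℕ)) : ℝ)^2 * (((a+c)! * (b+d)! : ℕ) : ℝ) := by
  push_cast
  rw [Nat.cast_choose ℝ (Nat.le_add_right a b), Nat.cast_choose ℝ (Nat.le_add_right c d),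
    Nat.cast_choose ℝ (Nat.le_add_right a c), Nat.cast_choose ℝ (Nat.le_add_right b d)]
  simp only [Nat.add_sub_cancel_left]
  have h1 : ((a)! : ℝ) ≠ 0 := by positivity
  have h2 : ((b)! : ℝ) ≠ 0 := by positivity
  have h3 : ((c)! : ℝ) ≠ 0 := by positivity
  have h4 : ((d)! : ℝ) ≠ 0 := by positivity
  field_simp

lemma sqrt_term_s13 (a b c d : ℕ) :
    Real.sqrt ((a+b)! * (c+d)!) *
      Real.sqrt (((a+b).choose a * (c+d).choose c * (a+c).choose a * (b+d).choose b : ℕ))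
      = (((a+b).choose a * (c+d).choose c : ℕ) : ℝ) * Real.sqrt ((a+c)! * (b+d)!) := by
  rw [← Real.sqrt_mul (by positivity)]
  have : (((a+b)! * (c+d)! : ℕ) : ℝ) *
      (((a+b).choose a * (c+d).choose c * (a+c).choose a * (b+d).choose b : ℕ) : ℝ)
      = ((((a+b).choose a * (c+d).choose c : ℕ)) : ℝ)^2 * (((a+c)! * (b+d)! : ℕ) : ℝ) :=
    key_nat_real a b c d
  push_cast at this ⊢
  rw [this, Real.sqrt_mul (by positivity), Real.sqrt_sq (by positivity)]

lemma famp_cmat (k0 k1 l0 l1 : ℕ) (A : Matrix (Fin 2) (Fin 2) ℂ) :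
    ((Real.sqrt (k0 ! * k1 !) : ℝ) : ℂ) * Famp k0 k1 l0 l1 (fun a b => A a b)
      = ((Real.sqrt (l0 ! * l1 !) : ℝ) : ℂ) * cMat k0 k1 l0 l1 A := by
  rw [Famp, squares_reindex k0 k1 l0 l1 (fun m00 m01 m10 m11 =>
    (Real.sqrt ((Nat.choose k0 m00 * Nat.choose k1 m10 *
        Nat.choose l0 m00 * Nat.choose l1 m01 : ℕ)) : ℂ) *
      A 0 0 ^ m00 * A 0 1 ^ m01 * A 1 0 ^ m10 * A 1 1 ^ m11)]
  rw [cMat_eq, Finset.mul_sum]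
  rw [← Finset.sum_product', ← Finset.sum_filter, Finset.mul_sum]
  refine Finset.sum_congr rfl fun p hp => ?_
  simp only [Finset.mem_filter, Finset.mem_product, Finset.mem_range] at hp
  obtain ⟨⟨h1, h2⟩, h3, h4⟩ := hp
  set a := p.1
  set c := p.2
  have hk0 : k0 = a + (k0 - a) := by omega
  have hk1 : k1 = c + (k1 - c) := by omega
  have hl0 : l0 = a + c := by omega
  have hl1 : l1 = (k0 - a) + (k1 - c) := by omega
  have key := sqrt_term_s13 a (k0 - a) c (k1 - c)
  rw [← hk0, ← hk1, ← hl0, ← hl1] at key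
  have key2 : (Real.sqrt (↑(k0 !) * ↑(k1 !)) : ℂ) *
      ((Real.sqrt ((k0.choose a * k1.choose c * l0.choose a * l1.choose (k0 - a) : ℕ)) : ℝ) : ℂ)
      = (((k0.choose a * k1.choose c : ℕ) : ℝ) : ℂ) * ((Real.sqrt (↑(l0 !) * ↑(l1 !)) : ℝ) : ℂ) := by
    rw [← Complex.ofReal_mul, ← Complex.ofReal_mul, key]
  push_cast at key2 ⊢
  linear_combination (A 0 0 ^ a * A 0 1 ^ (k0 - a) * A 1 0 ^ c * A 1 1 ^ (k1 - c)) * key2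

lemma cMat_mul (n : ℕ) (A B : Matrix (Fin 2) (Fin 2) ℂ) (k l : ℕ) (hk : k ≤ n) :
    cMat k (n-k) l (n-l) (A*B)
      = ∑ j ∈ Finset.range (n+1), cMat k (n-k) j (n-j) A * cMat j (n-j) l (n-l) B := by
  have hphi : phi (A*B) (X 0 ^ k * X 1 ^ (n-k)) = phi B (phi A (X 0 ^ k * X 1 ^ (n-k))) := by
    rw [← phi_comp]; rfl
  have hhom : (phi A (X 0 ^ k * X 1 ^ (n-k))).IsHomogeneous n := by
    have := phi_homog A k (n-k)
    rwa [Nat.add_sub_cancel' hk] at this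
  rw [cMat, hphi]
  conv_lhs => rw [homog_decomp hhom]
  rw [map_sum, coeff_sum]
  refine Finset.sum_congr rfl fun j _ => ?_
  rw [monomial_mexp, map_mul, map_mul, ← algebraMap_eq, AlgHom.commutes]
  rw [map_pow, map_pow]
  have : (algebraMap ℂ (MvPolynomial (Fin 2) ℂ))
      (coeff (mexp j (n-j)) (phi A (X 0 ^ k * X 1 ^ (n-k)))) * (phi B (X 0)) ^ j * (phi B (X 1)) ^ (n-j)
      = C (cMat k (n-k) j (n-j) A) * phi B (X 0 ^ j * X 1 ^ (n-j)) := by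
    simp only [map_mul, map_pow, algebraMap_eq, cMat]
    ring
  rw [this, coeff_C_mul, cMat, cMat]

lemma sqrtfac_ne (a b : ℕ) : ((Real.sqrt (a ! * b !) : ℝ) : ℂ) ≠ 0 := by
  have : (0:ℝ) < Real.sqrt (a ! * b !) := Real.sqrt_pos.2 (by positivity)
  simp only [ne_eq, Complex.ofReal_eq_zero]
  exact this.ne'

lemma sqrtfac_ne' (a : ℕ) : ((Real.sqrt (a !) : ℝ) : ℂ) ≠ 0 := by
  have : (0:ℝ) < Real.sqrt (a !) := Real.sqrt_pos.2 (by positivity)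
  simp only [ne_eq, Complex.ofReal_eq_zero]
  exact this.ne'

lemma famp_eq_cmat (k0 k1 l0 l1 : ℕ) (A : Matrix (Fin 2) (Fin 2) ℂ) :
    Famp k0 k1 l0 l1 (fun a b => A a b)
      = ((Real.sqrt (l0 ! * l1 !) : ℝ) : ℂ) / ((Real.sqrt (k0 ! * k1 !) : ℝ) : ℂ)
          * cMat k0 k1 l0 l1 A := by
  have h := famp_cmat k0 k1 l0 l1 A
  rw [div_mul_eq_mul_div, eq_div_iff (sqrtfac_ne k0 k1)]
  linear_combination h

lemma fSym_mul (n : ℕ) (A B : Matrix (Fin 2) (Fin 2) ℂ) :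
    fSym n (A * B) = fSym n A * fSym n B := by
  ext k l
  rw [Matrix.mul_apply]
  show Famp k.val (n - k.val) l.val (n - l.val) (fun a b => (A*B) a b)
    = ∑ j : Fin (n+1), Famp k.val (n-k.val) j.val (n-j.val) (fun a b => A a b) *
        Famp j.val (n-j.val) l.val (n-l.val) (fun a b => B a b)
  rw [famp_eq_cmat, cMat_mul n A B k.val l.val (by omega), Finset.mul_sum]
  rw [← Fin.sum_univ_eq_sum_range (fun j => ((Real.sqrt ((l.val)! * (n - l.val)!) : ℝ) : ℂ) / ((Real.sqrt ((k.val)! * (n - k.val)!) : ℝ) : ℂ) * (cMat (↑k) (n - ↑k) j (n - j) A * cMat j (n - j) (↑l) (n - ↑l) B))]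
  refine Finset.sum_congr rfl fun j _ => ?_
  rw [famp_eq_cmat, famp_eq_cmat]
  have key : ∀ (K J L a b : ℂ), J ≠ 0 → (J/K*a) * (L/J*b) = L/K*(a*b) := by
    intro K J L a b hJ
    field_simp
  exact (key _ _ _ _ _ (sqrtfac_ne (j.val) (n - j.val))).symm

lemma famp_conj (k0 k1 l0 l1 : ℕ) (α : Fin 2 → Fin 2 → ℂ) :
    (starRingEnd ℂ) (Famp l0 l1 k0 k1 α) = Famp k0 k1 l0 l1 (fun a b => (starRingEnd ℂ) (α b a)) := by
  rw [Famp, Famp, map_sum]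
  refine Finset.sum_nbij' (i := fun m => (m.1, m.2.2.1, m.2.1, m.2.2.2))
    (j := fun m => (m.1, m.2.2.1, m.2.1, m.2.2.2)) ?_ ?_ ?_ ?_ ?_
  · intro m hm
    simp only [squares, Finset.mem_filter, Finset.mem_product, Finset.mem_range] at hm ⊢
    omega
  · intro m hm
    simp only [squares, Finset.mem_filter, Finset.mem_product, Finset.mem_range] at hm ⊢
    omega
  · intro m _; rfl
  · intro m _; rfl
  · intro m hm
    simp only
    rw [map_mul, map_mul, map_mul, map_mul, map_pow, map_pow, map_pow, map_pow]
    have hre : (starRingEnd ℂ) ((Real.sqrt ((l0.choose m.1 * l1.choose m.2.2.1 *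
        k0.choose m.1 * k1.choose m.2.1 : ℕ)) : ℝ) : ℂ)
        = ((Real.sqrt ((l0.choose m.1 * l1.choose m.2.2.1 *
        k0.choose m.1 * k1.choose m.2.1 : ℕ)) : ℝ) : ℂ) := Complex.conj_ofReal _
    rw [hre]
    have harg : (l0.choose m.1 * l1.choose m.2.2.1 * k0.choose m.1 * k1.choose m.2.1 : ℕ)
        = (k0.choose m.1 * k1.choose m.2.1 * l0.choose m.1 * l1.choose m.2.2.1 : ℕ) := by ring
    rw [harg]
    ring

lemma famp_diag (k0 k1 l0 l1 : ℕ) (x y : ℂ) (α : Fin 2 → Fin 2 → ℂ)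
    (h00 : α 0 0 = x) (h01 : α 0 1 = 0) (h10 : α 1 0 = 0) (h11 : α 1 1 = y) :
    Famp k0 k1 l0 l1 α = if l0 = k0 ∧ l1 = k1 then x ^ k0 * y ^ k1 else 0 := by
  rw [Famp]
  by_cases hc : l0 = k0 ∧ l1 = k1
  · rw [if_pos hc]
    obtain ⟨h1, h2⟩ := hc
    subst h1; subst h2
    rw [Finset.sum_eq_single (l0, 0, 0, l1)]
    · simp [h00, h01, h10, h11]
    · intro m hm hne
      simp only [squares, Finset.mem_filter, Finset.mem_product, Finset.mem_range] at hm
      by_cases h2 : m.2.1 = 0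
      · by_cases h3 : m.2.2.1 = 0
        · exfalso
          apply hne
          obtain ⟨m1, m2, m3, m4⟩ := m
          simp only at h2 h3 hm ⊢
          subst h2; subst h3
          have : m1 = l0 ∧ m4 = l1 := by omega
          rw [this.1, this.2]
        · rw [h10, zero_pow h3]
          ring
      · rw [h01, zero_pow h2]
        ring
    · intro hnot
      exfalso
      apply hnot
      simp only [squares, Finset.mem_filter, Finset.mem_product, Finset.mem_range]
      omega
  · rw [if_neg hc]
    apply Finset.sum_eq_zero
    intro m hm
    simp only [squares, Finset.mem_filter, Finset.mem_product, Finset.mem_range] at hm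
    by_cases h2 : m.2.1 = 0
    · by_cases h3 : m.2.2.1 = 0
      · exfalso; apply hc; omega
      · rw [h10, zero_pow h3]; ring
    · rw [h01, zero_pow h2]; ring

end Aux

/-- If `A A† = diag(λ0, λ1)` then `f(A) f(A)†` is diagonal with entries
`λ0^k0 λ1^k1` for `k = (k0, k1)`, `k0 + k1 = n`. -/
theorem stmt_13 (n : ℕ) (hn : 0 < n) (A : Matrix (Fin 2) (Fin 2) ℂ) (lam0 lam1 : ℝ)
    (hA : A * A.conjTranspose = Matrix.diagonal ![(lam0 : ℂ), (lam1 : ℂ)]) :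
    fSym n A * (fSym n A).conjTranspose
      = Matrix.diagonal (fun k : Fin (n + 1) =>
          ((lam0 : ℂ) ^ (k : ℕ) * (lam1 : ℂ) ^ (n - (k : ℕ)))) := by
  have hconj : (fSym n A).conjTranspose = fSym n A.conjTranspose := by
    ext k l
    show (starRingEnd ℂ) (fSym n A l k) = _
    exact famp_conj k.val (n - k.val) l.val (n - l.val) (fun a b => A a b)
  rw [hconj, ← fSym_mul, hA]
  ext k l
  show Famp k.val (n - k.val) l.val (n - l.val)
      (fun a b => (Matrix.diagonal ![(lam0 : ℂ), (lam1 : ℂ)]) a b) = _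
  rw [famp_diag _ _ _ _ (lam0 : ℂ) (lam1 : ℂ) _ (by simp) (by simp) (by simp) (by simp)]
  by_cases h : k = l
  · subst h
    simp
  · rw [if_neg, Matrix.diagonal_apply_ne _ h]
    intro hh
    exact h (Fin.ext hh.1.symm)
end

section
/- First-moment formula for the symmetric power: let A be a 2x2 complex matrix with orthogonal rows of squared norms λ_0, λ_1 > 0, and fix k0 + k1 = n. Then Σ_{l0+l1=n} l1 * |f(A)_{kl}|^2 = λ_0^{k0} λ_1^{k1} * ( k0 * |α_{01}|^2/λ_0 + k1 * |α_{11}|^2/λ_1 ). -/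
open Finset

lemma mem_squares {k0 k1 l0 l1 : ℕ} {m : ℕ × ℕ × ℕ × ℕ} :
    m ∈ squares k0 k1 l0 l1 ↔ m.1 + m.2.1 = k0 ∧ m.2.2.1 + m.2.2.2 = k1 ∧
      m.1 + m.2.2.1 = l0 ∧ m.2.1 + m.2.2.2 = l1 := by
  simp only [squares, Finset.mem_filter, Finset.mem_product, Finset.mem_range]
  constructor
  · rintro ⟨_, h⟩; exact h
  · rintro ⟨h1, h2, h3, h4⟩; exact ⟨⟨by omega, by omega, by omega, by omega⟩, h1, h2, h3, h4⟩

noncomputable def Qa (α : Fin 2 → Fin 2 → ℂ) (k0 k1 l0 l1 : ℕ) : ℂ :=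
  ∑ m ∈ squares k0 k1 l0 l1,
    ((Nat.choose k0 m.1 * Nat.choose k1 m.2.2.1 : ℕ) : ℂ) *
      α 0 0 ^ m.1 * α 0 1 ^ m.2.1 * α 1 0 ^ m.2.2.1 * α 1 1 ^ m.2.2.2

lemma famp_eq (k0 k1 l0 l1 : ℕ) (h : k0 + k1 = l0 + l1) (α : Fin 2 → Fin 2 → ℂ) :
    Famp k0 k1 l0 l1 α =
      ((Real.sqrt (l0.factorial * l1.factorial) /
        Real.sqrt (k0.factorial * k1.factorial) : ℝ) : ℂ) * Qa α k0 k1 l0 l1 := by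
  rw [Famp, Qa, Finset.mul_sum]
  refine Finset.sum_congr rfl fun m hm => ?_
  obtain ⟨h1, h2, h3, h4⟩ := mem_squares.mp hm
  obtain ⟨m00, m01, m10, m11⟩ := m
  simp only at h1 h2 h3 h4 ⊢
  have e0 : Nat.choose k0 m00 * (m00.factorial * m01.factorial) = k0.factorial := by
    have := Nat.choose_mul_factorial_mul_factorial (show m00 ≤ k0 by omega)
    rw [show k0 - m00 = m01 by omega] at this; linarith [this]
  have e1 : Nat.choose k1 m10 * (m10.factorial * m11.factorial) = k1.factorial := by
    have := Nat.choose_mul_factorial_mul_factorial (show m10 ≤ k1 by omega)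
    rw [show k1 - m10 = m11 by omega] at this; linarith [this]
  have e2 : Nat.choose l0 m00 * (m00.factorial * m10.factorial) = l0.factorial := by
    have := Nat.choose_mul_factorial_mul_factorial (show m00 ≤ l0 by omega)
    rw [show l0 - m00 = m10 by omega] at this; linarith [this]
  have e3 : Nat.choose l1 m01 * (m01.factorial * m11.factorial) = l1.factorial := by
    have := Nat.choose_mul_factorial_mul_factorial (show m01 ≤ l1 by omega)
    rw [show l1 - m01 = m11 by omega] at this; linarith [this]
  have key : (Nat.choose k0 m00 * Nat.choose k1 m10 * Nat.choose l0 m00 * Nat.choose l1 m01) *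
      (k0.factorial * k1.factorial)
      = (Nat.choose k0 m00 * Nat.choose k1 m10)^2 * (l0.factorial * l1.factorial) := by
    rw [← e0, ← e1, ← e2, ← e3]; ring
  have hkpos : (0:ℝ) < (k0.factorial * k1.factorial : ℕ) := by
    positivity
  have keyR : ((Nat.choose k0 m00 * Nat.choose k1 m10 * Nat.choose l0 m00 * Nat.choose l1 m01 : ℕ) : ℝ)
      = ((Nat.choose k0 m00 * Nat.choose k1 m10 : ℕ) : ℝ)^2 *
        ((l0.factorial * l1.factorial : ℕ) : ℝ) / ((k0.factorial * k1.factorial : ℕ) : ℝ) := by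
    rw [eq_div_iff (ne_of_gt hkpos)]
    push_cast
    exact_mod_cast congrArg (Nat.cast : ℕ → ℝ) key
  have : Real.sqrt ((Nat.choose k0 m00 * Nat.choose k1 m10 * Nat.choose l0 m00 * Nat.choose l1 m01 : ℕ))
      = Real.sqrt (l0.factorial * l1.factorial) / Real.sqrt (k0.factorial * k1.factorial)
        * ((Nat.choose k0 m00 * Nat.choose k1 m10 : ℕ) : ℝ) := by
    rw [keyR, Real.sqrt_div (by positivity), Real.sqrt_mul (by positivity), Real.sqrt_sq (by positivity)]
    push_cast
    ring
  rw [this]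
  push_cast
  ring

lemma squares_swap_rows (k0 k1 l0 l1 : ℕ) (g : ℕ × ℕ × ℕ × ℕ → ℂ) :
    ∑ m ∈ squares k0 k1 l0 l1, g m
      = ∑ m ∈ squares k1 k0 l0 l1, g (m.2.2.1, m.2.2.2, m.1, m.2.1) := by
  refine Finset.sum_nbij' (fun m => (m.2.2.1, m.2.2.2, m.1, m.2.1))
    (fun m => (m.2.2.1, m.2.2.2, m.1, m.2.1)) ?_ ?_ ?_ ?_ ?_ <;>
    intro m hm <;> simp only [mem_squares] at * <;> try omega

lemma squares_swap_cols (k0 k1 l0 l1 : ℕ) (g : ℕ × ℕ × ℕ × ℕ → ℂ) :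
    ∑ m ∈ squares k0 k1 l0 l1, g m
      = ∑ m ∈ squares k0 k1 l1 l0, g (m.2.1, m.1, m.2.2.2, m.2.2.1) := by
  refine Finset.sum_nbij' (fun m => (m.2.1, m.1, m.2.2.2, m.2.2.1))
    (fun m => (m.2.1, m.1, m.2.2.2, m.2.2.1)) ?_ ?_ ?_ ?_ ?_ <;>
    intro m hm <;> simp only [mem_squares] at * <;> try omega

/-- column-swapped matrix -/
def csw (α : Fin 2 → Fin 2 → ℂ) : Fin 2 → Fin 2 → ℂ := fun i j => α i (1 - j)

lemma qa_csw (α : Fin 2 → Fin 2 → ℂ) (k0 k1 l0 l1 : ℕ) :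
    Qa α k0 k1 l0 l1 = Qa (csw α) k0 k1 l1 l0 := by
  rw [Qa, Qa, squares_swap_cols k0 k1 l1 l0]
  refine Finset.sum_congr rfl fun m hm => ?_
  obtain ⟨h1, h2, h3, h4⟩ := mem_squares.mp hm
  simp only [csw]
  norm_num
  rw [show k0.choose m.2.1 = k0.choose m.1 by
      rw [← Nat.choose_symm (show m.1 ≤ k0 by omega), show k0 - m.1 = m.2.1 by omega],
    show k1.choose m.2.2.2 = k1.choose m.2.2.1 by
      rw [← Nat.choose_symm (show m.2.2.1 ≤ k1 by omega),
        show k1 - m.2.2.1 = m.2.2.2 by omega]]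
  ring

lemma T00 (α : Fin 2 → Fin 2 → ℂ) (k0 k1 l0 l1 : ℕ) :
    ∑ m ∈ squares k0 k1 (l0+1) l1,
      (m.1 : ℂ) * ((Nat.choose k0 m.1 * Nat.choose k1 m.2.2.1 : ℕ) : ℂ) *
        α 0 0 ^ m.1 * α 0 1 ^ m.2.1 * α 1 0 ^ m.2.2.1 * α 1 1 ^ m.2.2.2
    = (k0 : ℂ) * α 0 0 * Qa α (k0-1) k1 l0 l1 := by
  rcases k0 with _ | K
  · rw [Finset.sum_eq_zero, Nat.cast_zero, zero_mul, zero_mul]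
    intro m hm
    obtain ⟨h1, _, _, _⟩ := mem_squares.mp hm
    have : m.1 = 0 := by omega
    rw [this, Nat.cast_zero, zero_mul, zero_mul, zero_mul, zero_mul, zero_mul]
  · rw [Qa, Finset.mul_sum]
    rw [← Finset.sum_filter_of_ne (p := fun m => 0 < m.1)
      (fun m _ hne => by by_contra h; push_neg at h; interval_cases h' : m.1 <;> simp_all)]
    refine Finset.sum_nbij' (fun m => (m.1 - 1, m.2.1, m.2.2.1, m.2.2.2))
      (fun m => (m.1 + 1, m.2.1, m.2.2.1, m.2.2.2)) ?_ ?_ ?_ ?_ ?_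
    · intro m hm
      simp only [Finset.mem_filter, mem_squares] at *
      omega
    · intro m hm
      simp only [Finset.mem_filter, mem_squares] at *
      omega
    · intro m hm
      simp only [Finset.mem_filter] at hm
      obtain ⟨-, h⟩ := hm
      ext <;> simp <;> omega
    · intro m hm; rfl
    · intro m hm
      simp only [Finset.mem_filter, mem_squares] at hm
      obtain ⟨⟨h1, h2, h3, h4⟩, hpos⟩ := hm
      obtain ⟨j, hj⟩ : ∃ j, m.1 = j + 1 := ⟨m.1 - 1, by omega⟩
      simp only [hj, Nat.add_sub_cancel, Nat.succ_sub_one]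
      have hch : (j + 1) * Nat.choose (K+1) (j+1) = (K+1) * Nat.choose K j := by
        rw [mul_comm]; exact (Nat.add_one_mul_choose_eq K j).symm
      have hch' : ((j:ℂ) + 1) * (Nat.choose (K+1) (j+1) : ℂ) = ((K:ℂ)+1) * (Nat.choose K j : ℂ) := by
        exact_mod_cast congrArg (Nat.cast : ℕ → ℂ) hch
      push_cast
      rw [pow_succ]
      linear_combination (α 0 0 ^ j * α 0 0 * α 0 1 ^ m.2.1 * α 1 0 ^ m.2.2.1 * α 1 1 ^ m.2.2.2 * (Nat.choose k1 m.2.2.1 : ℂ)) * hch'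

/-- row-swapped matrix -/
def rsw (α : Fin 2 → Fin 2 → ℂ) : Fin 2 → Fin 2 → ℂ := fun i j => α (1 - i) j

lemma qa_rsw (α : Fin 2 → Fin 2 → ℂ) (k0 k1 l0 l1 : ℕ) :
    Qa α k0 k1 l0 l1 = Qa (rsw α) k1 k0 l0 l1 := by
  rw [Qa, Qa, squares_swap_rows k1 k0 l0 l1]
  refine Finset.sum_congr rfl fun m hm => ?_
  simp only [rsw]
  norm_num
  push_cast
  ring

lemma qa_R1 (α : Fin 2 → Fin 2 → ℂ) (k0 k1 l0 l1 : ℕ) :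
    ((l0 : ℂ) + 1) * Qa α k0 k1 (l0+1) l1 =
      (k0 : ℂ) * α 0 0 * Qa α (k0-1) k1 l0 l1 +
        (k1 : ℂ) * α 1 0 * Qa α k0 (k1-1) l0 l1 := by
  rw [Qa, Finset.mul_sum]
  have step1 : ∀ m ∈ squares k0 k1 (l0+1) l1,
      ((l0 : ℂ) + 1) * (((Nat.choose k0 m.1 * Nat.choose k1 m.2.2.1 : ℕ) : ℂ) *
        α 0 0 ^ m.1 * α 0 1 ^ m.2.1 * α 1 0 ^ m.2.2.1 * α 1 1 ^ m.2.2.2)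
      = ((m.1 : ℂ) * ((Nat.choose k0 m.1 * Nat.choose k1 m.2.2.1 : ℕ) : ℂ) *
          α 0 0 ^ m.1 * α 0 1 ^ m.2.1 * α 1 0 ^ m.2.2.1 * α 1 1 ^ m.2.2.2)
        + ((m.2.2.1 : ℂ) * ((Nat.choose k0 m.1 * Nat.choose k1 m.2.2.1 : ℕ) : ℂ) *
          α 0 0 ^ m.1 * α 0 1 ^ m.2.1 * α 1 0 ^ m.2.2.1 * α 1 1 ^ m.2.2.2) := by
    intro m hm
    obtain ⟨h1, h2, h3, h4⟩ := mem_squares.mp hm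
    have : (m.1 : ℂ) + (m.2.2.1 : ℂ) = (l0 : ℂ) + 1 := by exact_mod_cast congrArg (Nat.cast : ℕ → ℂ) h3
    rw [← this]; ring
  rw [Finset.sum_congr rfl step1, Finset.sum_add_distrib, T00]
  congr 1
  have swap := squares_swap_rows k0 k1 (l0+1) l1
    (fun m => (m.2.2.1 : ℂ) * ((Nat.choose k0 m.1 * Nat.choose k1 m.2.2.1 : ℕ) : ℂ) *
      α 0 0 ^ m.1 * α 0 1 ^ m.2.1 * α 1 0 ^ m.2.2.1 * α 1 1 ^ m.2.2.2)
  rw [swap]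
  calc ∑ m ∈ squares k1 k0 (l0+1) l1,
        (fun m => (m.2.2.1 : ℂ) * ((Nat.choose k0 m.1 * Nat.choose k1 m.2.2.1 : ℕ) : ℂ) *
          α 0 0 ^ m.1 * α 0 1 ^ m.2.1 * α 1 0 ^ m.2.2.1 * α 1 1 ^ m.2.2.2)
          (m.2.2.1, m.2.2.2, m.1, m.2.1)
      = ∑ m ∈ squares k1 k0 (l0+1) l1,
        (m.1 : ℂ) * ((Nat.choose k1 m.1 * Nat.choose k0 m.2.2.1 : ℕ) : ℂ) *
          (rsw α) 0 0 ^ m.1 * (rsw α) 0 1 ^ m.2.1 * (rsw α) 1 0 ^ m.2.2.1 *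
            (rsw α) 1 1 ^ m.2.2.2 := by
        refine Finset.sum_congr rfl fun m hm => ?_
        simp only [rsw]
        norm_num
        push_cast
        ring
    _ = (k1 : ℂ) * (rsw α) 0 0 * Qa (rsw α) (k1-1) k0 l0 l1 := T00 (rsw α) k1 k0 l0 l1
    _ = (k1 : ℂ) * α 1 0 * Qa α k0 (k1-1) l0 l1 := by
        rw [← qa_rsw]
        norm_num [rsw]

lemma qa_R2 (α : Fin 2 → Fin 2 → ℂ) (k0 k1 l0 l1 : ℕ) :
    ((l1 : ℂ) + 1) * Qa α k0 k1 l0 (l1+1) =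
      (k0 : ℂ) * α 0 1 * Qa α (k0-1) k1 l0 l1 +
        (k1 : ℂ) * α 1 1 * Qa α k0 (k1-1) l0 l1 := by
  have h := qa_R1 (csw α) k0 k1 l1 l0
  simp only [← qa_csw] at h
  rw [h]
  norm_num [csw]

noncomputable def Sg (α : Fin 2 → Fin 2 → ℂ) (n k0 k1 k0' k1' : ℕ) : ℂ :=
  ∑ l1 ∈ Finset.range (n+1), (((n-l1).factorial * l1.factorial : ℕ) : ℂ) *
    (Qa α k0 k1 (n-l1) l1 * (starRingEnd ℂ) (Qa α k0' k1' (n-l1) l1))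

lemma keyB (α : Fin 2 → Fin 2 → ℂ) (n k0 k1 k0' k1' : ℕ) :
    ∑ l1 ∈ Finset.range (n+2), (l1 : ℂ) * (((n+1-l1).factorial * l1.factorial : ℕ) : ℂ) *
      (Qa α k0 k1 (n+1-l1) l1 * (starRingEnd ℂ) (Qa α k0' k1' (n+1-l1) l1))
    = (k0 : ℂ) * (k0' : ℂ) * (α 0 1 * (starRingEnd ℂ) (α 0 1)) * Sg α n (k0-1) k1 (k0'-1) k1'
      + (k0 : ℂ) * (k1' : ℂ) * (α 0 1 * (starRingEnd ℂ) (α 1 1)) * Sg α n (k0-1) k1 k0' (k1'-1)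
      + (k1 : ℂ) * (k0' : ℂ) * (α 1 1 * (starRingEnd ℂ) (α 0 1)) * Sg α n k0 (k1-1) (k0'-1) k1'
      + (k1 : ℂ) * (k1' : ℂ) * (α 1 1 * (starRingEnd ℂ) (α 1 1)) * Sg α n k0 (k1-1) k0' (k1'-1) := by
  rw [Finset.sum_range_succ' _ (n+1)]
  simp only [Nat.cast_zero, zero_mul, add_zero]
  rw [Sg, Sg, Sg, Sg, Finset.mul_sum, Finset.mul_sum, Finset.mul_sum, Finset.mul_sum,
    ← Finset.sum_add_distrib, ← Finset.sum_add_distrib, ← Finset.sum_add_distrib]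
  refine Finset.sum_congr rfl fun j hj => ?_
  have hs : n + 1 - (j+1) = n - j := by omega
  rw [hs]
  have e1 := qa_R2 α k0 k1 (n-j) j
  have e2' : ((j:ℂ)+1) * (starRingEnd ℂ) (Qa α k0' k1' (n-j) (j+1))
      = (k0' : ℂ) * (starRingEnd ℂ) (α 0 1) * (starRingEnd ℂ) (Qa α (k0'-1) k1' (n-j) j)
        + (k1' : ℂ) * (starRingEnd ℂ) (α 1 1) * (starRingEnd ℂ) (Qa α k0' (k1'-1) (n-j) j) := by
    have h := congrArg (starRingEnd ℂ) (qa_R2 α k0' k1' (n-j) j)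
    simpa [map_add, map_mul] using h
  push_cast [Nat.factorial_succ]
  linear_combination
    (((n-j).factorial : ℂ) * (j.factorial : ℂ) *
      (((j:ℂ)+1) * (starRingEnd ℂ) (Qa α k0' k1' (n-j) (j+1)))) * e1
    + (((n-j).factorial : ℂ) * (j.factorial : ℂ) *
      ((k0:ℂ) * α 0 1 * Qa α (k0-1) k1 (n-j) j + (k1:ℂ) * α 1 1 * Qa α k0 (k1-1) (n-j) j)) * e2'

lemma keyA (α : Fin 2 → Fin 2 → ℂ) (n k0 k1 k0' k1' : ℕ) :
    ∑ l1 ∈ Finset.range (n+2), ((n+1-l1 : ℕ) : ℂ) * (((n+1-l1).factorial * l1.factorial : ℕ) : ℂ) *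
      (Qa α k0 k1 (n+1-l1) l1 * (starRingEnd ℂ) (Qa α k0' k1' (n+1-l1) l1))
    = (k0 : ℂ) * (k0' : ℂ) * (α 0 0 * (starRingEnd ℂ) (α 0 0)) * Sg α n (k0-1) k1 (k0'-1) k1'
      + (k0 : ℂ) * (k1' : ℂ) * (α 0 0 * (starRingEnd ℂ) (α 1 0)) * Sg α n (k0-1) k1 k0' (k1'-1)
      + (k1 : ℂ) * (k0' : ℂ) * (α 1 0 * (starRingEnd ℂ) (α 0 0)) * Sg α n k0 (k1-1) (k0'-1) k1'
      + (k1 : ℂ) * (k1' : ℂ) * (α 1 0 * (starRingEnd ℂ) (α 1 0)) * Sg α n k0 (k1-1) k0' (k1'-1) := by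
  rw [Finset.sum_range_succ _ (n+1)]
  simp only [Nat.sub_self, Nat.cast_zero, zero_mul, add_zero]
  rw [Sg, Sg, Sg, Sg, Finset.mul_sum, Finset.mul_sum, Finset.mul_sum, Finset.mul_sum,
    ← Finset.sum_add_distrib, ← Finset.sum_add_distrib, ← Finset.sum_add_distrib]
  refine Finset.sum_congr rfl fun j hj => ?_
  have hjn : j ≤ n := by simpa [Nat.lt_succ_iff] using hj
  have hs : n + 1 - j = (n - j) + 1 := by omega
  rw [hs]
  have e1 := qa_R1 α k0 k1 (n-j) j
  have e2' : (((n-j : ℕ):ℂ)+1) * (starRingEnd ℂ) (Qa α k0' k1' ((n-j)+1) j)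
      = (k0' : ℂ) * (starRingEnd ℂ) (α 0 0) * (starRingEnd ℂ) (Qa α (k0'-1) k1' (n-j) j)
        + (k1' : ℂ) * (starRingEnd ℂ) (α 1 0) * (starRingEnd ℂ) (Qa α k0' (k1'-1) (n-j) j) := by
    have h := congrArg (starRingEnd ℂ) (qa_R1 α k0' k1' (n-j) j)
    simpa [map_add, map_mul] using h
  push_cast [Nat.factorial_succ]
  linear_combination
    (((n-j).factorial : ℂ) * (j.factorial : ℂ) *
      ((((n-j:ℕ):ℂ)+1) * (starRingEnd ℂ) (Qa α k0' k1' ((n-j)+1) j))) * e1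
    + (((n-j).factorial : ℂ) * (j.factorial : ℂ) *
      ((k0:ℂ) * α 0 0 * Qa α (k0-1) k1 (n-j) j + (k1:ℂ) * α 1 0 * Qa α k0 (k1-1) (n-j) j)) * e2'

lemma Sg_rec (α : Fin 2 → Fin 2 → ℂ) (n k0 k1 k0' k1' : ℕ) :
    ((n : ℂ) + 1) * Sg α (n+1) k0 k1 k0' k1'
    = (k0 : ℂ) * (k0' : ℂ) * (α 0 0 * (starRingEnd ℂ) (α 0 0) + α 0 1 * (starRingEnd ℂ) (α 0 1))
        * Sg α n (k0-1) k1 (k0'-1) k1'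
      + (k0 : ℂ) * (k1' : ℂ) * (α 0 0 * (starRingEnd ℂ) (α 1 0) + α 0 1 * (starRingEnd ℂ) (α 1 1))
        * Sg α n (k0-1) k1 k0' (k1'-1)
      + (k1 : ℂ) * (k0' : ℂ) * (α 1 0 * (starRingEnd ℂ) (α 0 0) + α 1 1 * (starRingEnd ℂ) (α 0 1))
        * Sg α n k0 (k1-1) (k0'-1) k1'
      + (k1 : ℂ) * (k1' : ℂ) * (α 1 0 * (starRingEnd ℂ) (α 1 0) + α 1 1 * (starRingEnd ℂ) (α 1 1))
        * Sg α n k0 (k1-1) k0' (k1'-1) := by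
  have split : ((n : ℂ) + 1) * Sg α (n+1) k0 k1 k0' k1'
      = (∑ l1 ∈ Finset.range (n+2), ((n+1-l1 : ℕ) : ℂ) * (((n+1-l1).factorial * l1.factorial : ℕ) : ℂ) *
          (Qa α k0 k1 (n+1-l1) l1 * (starRingEnd ℂ) (Qa α k0' k1' (n+1-l1) l1)))
        + (∑ l1 ∈ Finset.range (n+2), (l1 : ℂ) * (((n+1-l1).factorial * l1.factorial : ℕ) : ℂ) *
          (Qa α k0 k1 (n+1-l1) l1 * (starRingEnd ℂ) (Qa α k0' k1' (n+1-l1) l1))) := by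
    rw [Sg, Finset.mul_sum, ← Finset.sum_add_distrib]
    refine Finset.sum_congr rfl fun l1 hl1 => ?_
    have h : (n + 1 - l1) + l1 = n + 1 := by
      simp only [Finset.mem_range] at hl1; omega
    have hc : ((n+1-l1 : ℕ) : ℂ) + (l1 : ℂ) = (n : ℂ) + 1 := by
      exact_mod_cast congrArg (Nat.cast : ℕ → ℂ) h
    rw [← hc]; ring
  rw [split, keyA, keyB]
  ring

lemma qa_zero (α : Fin 2 → Fin 2 → ℂ) : Qa α 0 0 0 0 = 1 := by
  have hs : squares 0 0 0 0 = {(0,0,0,0)} := rfl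
  simp [Qa, hs]

lemma Sg_eq (α : Fin 2 → Fin 2 → ℂ) (lam0 lam1 : ℝ)
    (hG00 : α 0 0 * (starRingEnd ℂ) (α 0 0) + α 0 1 * (starRingEnd ℂ) (α 0 1) = (lam0 : ℂ))
    (hG11 : α 1 0 * (starRingEnd ℂ) (α 1 0) + α 1 1 * (starRingEnd ℂ) (α 1 1) = (lam1 : ℂ))
    (hG01 : α 0 0 * (starRingEnd ℂ) (α 1 0) + α 0 1 * (starRingEnd ℂ) (α 1 1) = 0) :
    ∀ n k0 k1 k0' k1' : ℕ, k0 + k1 = n → k0' + k1' = n →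
      Sg α n k0 k1 k0' k1' = if k0 = k0' then
        ((k0.factorial * k1.factorial : ℕ) : ℂ) * (lam0 : ℂ)^k0 * (lam1 : ℂ)^k1 else 0 := by
  have hG10 : α 1 0 * (starRingEnd ℂ) (α 0 0) + α 1 1 * (starRingEnd ℂ) (α 0 1) = 0 := by
    have h := congrArg (starRingEnd ℂ) hG01
    simp only [map_add, map_mul, RingHom.map_zero, Complex.conj_conj] at h
    linear_combination h
  intro n
  induction n with
  | zero =>
    intro k0 k1 k0' k1' hk hk'
    obtain ⟨rfl, rfl⟩ : k0 = 0 ∧ k1 = 0 := by omega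
    obtain ⟨rfl, rfl⟩ : k0' = 0 ∧ k1' = 0 := by omega
    simp [Sg, qa_zero]
  | succ n IH =>
    intro k0 k1 k0' k1' hk hk'
    have hne : ((n : ℂ) + 1) ≠ 0 := by
      exact_mod_cast Nat.cast_add_one_ne_zero (R := ℂ) n
    apply mul_left_cancel₀ hne
    rw [Sg_rec, hG00, hG01, hG10, hG11]
    simp only [mul_zero, zero_mul, add_zero, zero_add, mul_assoc]
    by_cases hd : k0 = k0'
    · subst hd
      have hk1 : k1 = k1' := by omega
      subst hk1
      simp only [if_pos rfl]
      rcases Nat.eq_zero_or_pos k0 with h0 | h0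
      · subst h0
        have hkk : k1 = n + 1 := by omega
        subst hkk
        rw [show n + 1 - 1 = n from rfl, IH 0 n 0 n (by omega) (by omega)]
        simp only [if_pos trivial]
        push_cast [Nat.factorial_succ]
        ring
      · rcases Nat.eq_zero_or_pos k1 with h1 | h1
        · subst h1
          have hkk : k0 = n + 1 := by omega
          subst hkk
          rw [show n + 1 - 1 = n from rfl, IH n 0 n 0 (by omega) (by omega)]
          simp only [if_pos trivial]
          push_cast [Nat.factorial_succ]
          ring
        · obtain ⟨K0, rfl⟩ : ∃ K0, k0 = K0 + 1 := ⟨k0 - 1, by omega⟩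
          obtain ⟨K1, rfl⟩ : ∃ K1, k1 = K1 + 1 := ⟨k1 - 1, by omega⟩
          rw [show K0 + 1 - 1 = K0 from rfl, show K1 + 1 - 1 = K1 from rfl,
            IH (K0) (K1+1) (K0) (K1+1) (by omega) (by omega),
            IH (K0+1) (K1) (K0+1) (K1) (by omega) (by omega)]
          simp only [if_pos rfl]
          have hcast : ((n : ℂ) + 1) = ((K0 : ℂ) + 1) + ((K1 : ℂ) + 1) := by
            have : n + 1 = (K0 + 1) + (K1 + 1) := by omega
            exact_mod_cast congrArg (Nat.cast : ℕ → ℂ) this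
          rw [hcast]
          push_cast [Nat.factorial_succ]
          ring
    · rw [if_neg hd]
      have t1 : (k0 : ℂ) * ((k0' : ℂ) * ((lam0 : ℂ) * Sg α n (k0-1) k1 (k0'-1) k1')) = 0 := by
        rcases Nat.eq_zero_or_pos k0 with h0 | h0
        · subst h0; simp
        · rcases Nat.eq_zero_or_pos k0' with h0' | h0'
          · subst h0'; simp
          · rw [IH (k0-1) k1 (k0'-1) k1' (by omega) (by omega),
              if_neg (by omega)]
            simp
      have t4 : (k1 : ℂ) * ((k1' : ℂ) * ((lam1 : ℂ) * Sg α n k0 (k1-1) k0' (k1'-1))) = 0 := by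
        rcases Nat.eq_zero_or_pos k1 with h1 | h1
        · subst h1; simp
        · rcases Nat.eq_zero_or_pos k1' with h1' | h1'
          · subst h1'; simp
          · rw [IH k0 (k1-1) k0' (k1'-1) (by omega) (by omega), if_neg hd]
            simp
      rw [t1, t4]
      simp

lemma moment_s14 (α : Fin 2 → Fin 2 → ℂ) (lam0 lam1 : ℝ)
    (hG00 : α 0 0 * (starRingEnd ℂ) (α 0 0) + α 0 1 * (starRingEnd ℂ) (α 0 1) = (lam0 : ℂ))
    (hG11 : α 1 0 * (starRingEnd ℂ) (α 1 0) + α 1 1 * (starRingEnd ℂ) (α 1 1) = (lam1 : ℂ))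
    (hG01 : α 0 0 * (starRingEnd ℂ) (α 1 0) + α 0 1 * (starRingEnd ℂ) (α 1 1) = 0)
    (N k0 k1 : ℕ) (hk : k0 + k1 = N + 1) :
    ∑ l1 ∈ Finset.range (N+2), (l1 : ℂ) * (((N+1-l1).factorial * l1.factorial : ℕ) : ℂ) *
      (Qa α k0 k1 (N+1-l1) l1 * (starRingEnd ℂ) (Qa α k0 k1 (N+1-l1) l1))
    = (k0 : ℂ) * (k0 : ℂ) * (α 0 1 * (starRingEnd ℂ) (α 0 1)) *
        (((k0-1).factorial * k1.factorial : ℕ) : ℂ) * (lam0 : ℂ)^(k0-1) * (lam1 : ℂ)^k1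
      + (k1 : ℂ) * (k1 : ℂ) * (α 1 1 * (starRingEnd ℂ) (α 1 1)) *
        ((k0.factorial * (k1-1).factorial : ℕ) : ℂ) * (lam0 : ℂ)^k0 * (lam1 : ℂ)^(k1-1) := by
  have hSg := Sg_eq α lam0 lam1 hG00 hG11 hG01
  rw [keyB]
  have h1 : (k0 : ℂ) * (k0 : ℂ) * (α 0 1 * (starRingEnd ℂ) (α 0 1)) * Sg α N (k0-1) k1 (k0-1) k1
      = (k0 : ℂ) * (k0 : ℂ) * (α 0 1 * (starRingEnd ℂ) (α 0 1)) *
        ((((k0-1).factorial * k1.factorial : ℕ) : ℂ) * (lam0 : ℂ)^(k0-1) * (lam1 : ℂ)^k1) := by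
    rcases Nat.eq_zero_or_pos k0 with h0 | h0
    · subst h0; simp
    · rw [hSg N (k0-1) k1 (k0-1) k1 (by omega) (by omega), if_pos rfl]
  have h2 : (k0 : ℂ) * (k1 : ℂ) * (α 0 1 * (starRingEnd ℂ) (α 1 1)) * Sg α N (k0-1) k1 k0 (k1-1)
      = 0 := by
    rcases Nat.eq_zero_or_pos k0 with h0 | h0
    · subst h0; simp
    · rcases Nat.eq_zero_or_pos k1 with h1 | h1
      · subst h1; simp
      · rw [hSg N (k0-1) k1 k0 (k1-1) (by omega) (by omega), if_neg (by omega), mul_zero]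
  have h3 : (k1 : ℂ) * (k0 : ℂ) * (α 1 1 * (starRingEnd ℂ) (α 0 1)) * Sg α N k0 (k1-1) (k0-1) k1
      = 0 := by
    rcases Nat.eq_zero_or_pos k0 with h0 | h0
    · subst h0; simp
    · rcases Nat.eq_zero_or_pos k1 with h1 | h1
      · subst h1; simp
      · rw [hSg N k0 (k1-1) (k0-1) k1 (by omega) (by omega), if_neg (by omega), mul_zero]
  have h4 : (k1 : ℂ) * (k1 : ℂ) * (α 1 1 * (starRingEnd ℂ) (α 1 1)) * Sg α N k0 (k1-1) k0 (k1-1)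
      = (k1 : ℂ) * (k1 : ℂ) * (α 1 1 * (starRingEnd ℂ) (α 1 1)) *
        (((k0.factorial * (k1-1).factorial : ℕ) : ℂ) * (lam0 : ℂ)^k0 * (lam1 : ℂ)^(k1-1)) := by
    rcases Nat.eq_zero_or_pos k1 with h1 | h1
    · subst h1; simp
    · rw [hSg N k0 (k1-1) k0 (k1-1) (by omega) (by omega), if_pos rfl]
  rw [h1, h2, h3, h4]
  ring

/-- First-moment formula for the symmetric power (moment in `l1`):
`Σ_{l0+l1=n} l1 |f(A)_{kl}|^2 = λ0^k0 λ1^k1 (k0 |α01|^2/λ0 + k1 |α11|^2/λ1)`. -/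
theorem stmt_14 (n : ℕ) (hn : 0 < n) (A : Matrix (Fin 2) (Fin 2) ℂ) (lam0 lam1 : ℝ)
    (h0 : ‖A 0 0‖ ^ 2 + ‖A 0 1‖ ^ 2 = lam0)
    (h1 : ‖A 1 0‖ ^ 2 + ‖A 1 1‖ ^ 2 = lam1)
    (horth : A 0 0 * (starRingEnd ℂ) (A 1 0) + A 0 1 * (starRingEnd ℂ) (A 1 1) = 0)
    (hl0 : 0 < lam0) (hl1 : 0 < lam1) (k : Fin (n + 1)) :
    ∑ l : Fin (n + 1), ((n - (l : ℕ) : ℕ) : ℝ) * ‖fSym n A k l‖ ^ 2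
      = lam0 ^ (k : ℕ) * lam1 ^ (n - (k : ℕ)) *
        ((k : ℕ) * ‖A 0 1‖ ^ 2 / lam0 +
          ((n - (k : ℕ) : ℕ) : ℝ) * ‖A 1 1‖ ^ 2 / lam1) := by
  obtain ⟨N, rfl⟩ : ∃ N, n = N + 1 := ⟨n - 1, by omega⟩
  have hk0lt : (k : ℕ) ≤ N + 1 := Nat.lt_succ_iff.mp k.isLt
  set k0 := (k : ℕ) with hk0def
  set k1 := N + 1 - k0 with hk1def
  have hkk : k0 + k1 = N + 1 := by omega
  have hG00 : A 0 0 * (starRingEnd ℂ) (A 0 0) + A 0 1 * (starRingEnd ℂ) (A 0 1) = (lam0 : ℂ) := by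
    rw [Complex.mul_conj, Complex.mul_conj, ← Complex.ofReal_add,
      show Complex.normSq (A 0 0) + Complex.normSq (A 0 1) = lam0 by
        rw [← h0, Complex.sq_norm, Complex.sq_norm]]
  have hG11 : A 1 0 * (starRingEnd ℂ) (A 1 0) + A 1 1 * (starRingEnd ℂ) (A 1 1) = (lam1 : ℂ) := by
    rw [Complex.mul_conj, Complex.mul_conj, ← Complex.ofReal_add,
      show Complex.normSq (A 1 0) + Complex.normSq (A 1 1) = lam1 by
        rw [← h1, Complex.sq_norm, Complex.sq_norm]]
  have hM := moment_s14 (fun a b => A a b) lam0 lam1 hG00 hG11 horth N k0 k1 hkk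
  -- Step 1 : as a sum over range
  have hsum1 : ∑ l : Fin (N + 1 + 1), ((N + 1 - (l : ℕ) : ℕ) : ℝ) * ‖fSym (N+1) A k l‖ ^ 2
      = ∑ l0 ∈ Finset.range (N+2), ((N + 1 - l0 : ℕ) : ℝ) *
          ‖Famp k0 k1 l0 (N+1-l0) (fun a b => A a b)‖ ^ 2 := by
    rw [← Fin.sum_univ_eq_sum_range (fun l0 => ((N + 1 - l0 : ℕ) : ℝ) *
          ‖Famp k0 k1 l0 (N+1-l0) (fun a b => A a b)‖ ^ 2) (N+2)]
    rfl
  -- Step 2 : famp to Qa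
  have hsum2 : ∀ l0 ∈ Finset.range (N+2),
      ((N + 1 - l0 : ℕ) : ℝ) * ‖Famp k0 k1 l0 (N+1-l0) (fun a b => A a b)‖ ^ 2
      = ((N + 1 - l0 : ℕ) : ℝ) * (((l0.factorial * (N+1-l0).factorial : ℕ) : ℝ) /
          ((k0.factorial * k1.factorial : ℕ) : ℝ) *
          ‖Qa (fun a b => A a b) k0 k1 l0 (N+1-l0)‖ ^ 2) := by
    intro l0 hl0'
    simp only [Finset.mem_range] at hl0'
    rw [famp_eq k0 k1 l0 (N+1-l0) (by omega), norm_mul, Complex.norm_real, Real.norm_eq_abs, mul_pow,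
      abs_of_nonneg (by positivity), div_pow, Real.sq_sqrt (by positivity),
      Real.sq_sqrt (by positivity)]
    push_cast
    ring
  rw [hsum1, Finset.sum_congr rfl hsum2]
  -- Step 3 : reflect the sum
  have hrefl := Finset.sum_range_reflect (fun l1 => ((l1 : ℕ) : ℝ) *
      ((((N+1-l1).factorial * l1.factorial : ℕ) : ℝ) / ((k0.factorial * k1.factorial : ℕ) : ℝ) *
        ‖Qa (fun a b => A a b) k0 k1 (N+1-l1) l1‖ ^ 2)) (N+2)
  have hstep3 : ∑ l0 ∈ Finset.range (N+2), ((N + 1 - l0 : ℕ) : ℝ) *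
      (((l0.factorial * (N+1-l0).factorial : ℕ) : ℝ) / ((k0.factorial * k1.factorial : ℕ) : ℝ) *
        ‖Qa (fun a b => A a b) k0 k1 l0 (N+1-l0)‖ ^ 2)
      = ∑ l1 ∈ Finset.range (N+2), ((l1 : ℕ) : ℝ) *
      ((((N+1-l1).factorial * l1.factorial : ℕ) : ℝ) / ((k0.factorial * k1.factorial : ℕ) : ℝ) *
        ‖Qa (fun a b => A a b) k0 k1 (N+1-l1) l1‖ ^ 2) := by
    rw [← hrefl]
    refine Finset.sum_congr rfl fun l0 hl0' => ?_
    simp only [Finset.mem_range] at hl0'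
    rw [show N + 2 - 1 - l0 = N + 1 - l0 by omega, show N + 1 - (N + 1 - l0) = l0 by omega]
  rw [hstep3]
  -- Step 4 : the key real identity
  have hfactpos : (0:ℝ) < ((k0.factorial * k1.factorial : ℕ) : ℝ) := by positivity
  have key : ∑ l1 ∈ Finset.range (N+2), (l1 : ℝ) *
      ((((N+1-l1).factorial * l1.factorial : ℕ) : ℝ) *
        ‖Qa (fun a b => A a b) k0 k1 (N+1-l1) l1‖ ^ 2)
      = (k0 : ℝ) * (k0 : ℝ) * ‖A 0 1‖ ^ 2 *
          (((k0-1).factorial * k1.factorial : ℕ) : ℝ) * lam0^(k0-1) * lam1^k1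
        + (k1 : ℝ) * (k1 : ℝ) * ‖A 1 1‖ ^ 2 *
          ((k0.factorial * (k1-1).factorial : ℕ) : ℝ) * lam0^k0 * lam1^(k1-1) := by
    apply Complex.ofReal_injective
    rw [Complex.ofReal_sum]
    have : ∀ l1 ∈ Finset.range (N+2),
        (((l1 : ℝ) * ((((N+1-l1).factorial * l1.factorial : ℕ) : ℝ) *
          ‖Qa (fun a b => A a b) k0 k1 (N+1-l1) l1‖ ^ 2) : ℝ) : ℂ)
        = (l1 : ℂ) * (((N+1-l1).factorial * l1.factorial : ℕ) : ℂ) *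
          (Qa (fun a b => A a b) k0 k1 (N+1-l1) l1 *
            (starRingEnd ℂ) (Qa (fun a b => A a b) k0 k1 (N+1-l1) l1)) := by
      intro l1 _
      rw [Complex.mul_conj, ← Complex.sq_norm]
      push_cast
      ring
    rw [Finset.sum_congr rfl this, hM, Complex.mul_conj, Complex.mul_conj,
      ← Complex.sq_norm, ← Complex.sq_norm]
    push_cast
    ring
  -- divide key by k0! k1!
  have hdiv : ∑ l1 ∈ Finset.range (N+2), ((l1 : ℕ) : ℝ) *
      ((((N+1-l1).factorial * l1.factorial : ℕ) : ℝ) / ((k0.factorial * k1.factorial : ℕ) : ℝ) *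
        ‖Qa (fun a b => A a b) k0 k1 (N+1-l1) l1‖ ^ 2)
      = (∑ l1 ∈ Finset.range (N+2), (l1 : ℝ) *
        ((((N+1-l1).factorial * l1.factorial : ℕ) : ℝ) *
          ‖Qa (fun a b => A a b) k0 k1 (N+1-l1) l1‖ ^ 2)) /
        ((k0.factorial * k1.factorial : ℕ) : ℝ) := by
    rw [Finset.sum_div]
    refine Finset.sum_congr rfl fun l1 _ => ?_
    field_simp
  rw [hdiv, key]
  -- final arithmetic
  rcases Nat.eq_zero_or_pos k0 with hz0 | hz0
  · have hk1v : k1 = N + 1 := by omega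
    rw [hz0, hk1v]
    obtain ⟨M, hM'⟩ : ∃ M, N + 1 = M + 1 := ⟨N, rfl⟩
    simp only [Nat.cast_zero, zero_mul, zero_add, pow_zero]
    rw [show (N+1) - 1 = N from rfl]
    push_cast [Nat.factorial_succ]
    field_simp
    ring
  · rcases Nat.eq_zero_or_pos k1 with hz1 | hz1
    · have hk0v : k0 = N + 1 := by omega
      rw [hz1, hk0v]
      simp only [Nat.cast_zero, zero_mul, add_zero, pow_zero]
      rw [show (N+1) - 1 = N from rfl]
      push_cast [Nat.factorial_succ]
      field_simp
      ring
    · obtain ⟨K0, hK0⟩ : ∃ K0, k0 = K0 + 1 := ⟨k0 - 1, by omega⟩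
      obtain ⟨K1, hK1⟩ : ∃ K1, k1 = K1 + 1 := ⟨k1 - 1, by omega⟩
      rw [hK0, hK1, show K0 + 1 - 1 = K0 from rfl, show K1 + 1 - 1 = K1 from rfl]
      push_cast [Nat.factorial_succ]
      field_simp
      ring
end
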